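/- arXiv:0909.0637 — 7 statements merged into one kernel-verified Lean document; each statement's English description precedes it below -/
import Mathlib

section
/- Let ρ_d > 0, b > 0, and let α, ω : [0, ∞) → (0, ∞) be continuous, bounded, strictly decreasing functions with limit 0 at infinity. Define b* by b* = b if b = ρ_d, and otherwise b* is the unique positive number with b* ≠ b and b*·exp(−b*/ρ_d) = b·exp(−b/ρ_d). Then there exists a nonzero steady state of the Approximation 4 system, i.e., numbers Ã > 0 and Ω̄ > 0 satisfying ρ_d = α(Ã)·∫₀¹ exp((b − α(Ã))x/ρ_d) dx and Ã = α(Ã)·Ω̄/ω(Ω̄), if and only if α(0) > b*; moreover, when it exists, the pair (Ã, Ω̄) is unique. If α(0) ≤ b*, zero is the unique steady state. -/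
/-!
Evaluating the integral, the first steady-state equation says that `a = α Ã` solves
`a e^{-a/ρ} = b e^{-b/ρ}` with `a ≠ b`, or `a = b = ρ`. As `x ↦ x e^{-x/ρ}` increases up to `ρ`
and decreases after it, this equation has at most one root other than `b`, and one checks that
both cases amount to `α Ã = b*`. Since `α` is continuous, strictly decreasing and tends to `0`,
this has a unique root `Ã > 0` exactly when `α 0 > b*`. The second equation then reads
`Ω̄ / ω Ω̄ = Ã / b*`, and `Ω̄ ↦ Ω̄ / ω Ω̄` is a strictly increasing bijection of `(0, ∞)`.
-/

open Real Set Filter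

/-- A nonzero steady state of the Approximation 4 system, expressed via the reduced
algebraic system for `(Ã, Ω̄)`:
`ρ = α(Ã) ∫₀¹ exp((b − α(Ã)) x / ρ) dx` and `Ã = α(Ã) Ω̄ / ω(Ω̄)`. -/
def IsNonzeroSteadyState4 (ρ b : ℝ) (α ω : ℝ → ℝ) (A Ω : ℝ) : Prop :=
  0 < A ∧ 0 < Ω ∧
  ρ = α A * ∫ x in (0 : ℝ)..1, Real.exp ((b - α A) * x / ρ) ∧
  A = α A * Ω / ω Ω

theorem intermediate_value_Ioi_of_tendsto {α δ : Type*} [ConditionallyCompleteLinearOrder α]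
    [TopologicalSpace α] [OrderTopology α] [DenselyOrdered α] [LinearOrder δ]
    [TopologicalSpace δ] [OrderClosedTopology δ] {a : α} {f : α → δ} {l : δ}
    (hf : ContinuousOn f (Ici a)) (hlim : Tendsto f atTop (nhds l)) :
    Ioo l (f a) ⊆ f '' Ioi a := by
  rintro c ⟨hlc, hca⟩
  obtain ⟨M, hMc, haM⟩ := ((hlim.eventually (eventually_lt_nhds hlc)).and
    (eventually_ge_atTop a)).exists
  obtain ⟨x, hx, rfl⟩ := intermediate_value_Ioo' haM (hf.mono Icc_subset_Ici_self) ⟨hMc, hca⟩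
  exact ⟨x, hx.1, rfl⟩

theorem integral_exp_const_mul {c : ℝ} (hc : c ≠ 0) (a b : ℝ) :
    ∫ x in a..b, exp (c * x) = (exp (c * b) - exp (c * a)) / c := by
  rw [intervalIntegral.integral_comp_mul_left (fun x => exp x) hc, integral_exp, smul_eq_mul,
    inv_mul_eq_div]

section MulExpNegDiv

variable {ρ : ℝ}

theorem hasDerivAt_mul_exp_neg_div (x : ℝ) :
    HasDerivAt (fun x => x * exp (-x / ρ)) (exp (-x / ρ) * (1 - x / ρ)) x :=
  ((hasDerivAt_id' x).fun_mul ((hasDerivAt_id' x).fun_neg.div_const ρ).exp).congr_deriv (by ring)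

theorem continuous_mul_exp_neg_div : Continuous fun x : ℝ => x * exp (-x / ρ) := by
  fun_prop

theorem strictMonoOn_mul_exp_neg_div (hρ : 0 < ρ) :
    StrictMonoOn (fun x => x * exp (-x / ρ)) (Iic ρ) := by
  refine strictMonoOn_of_deriv_pos (convex_Iic ρ) continuous_mul_exp_neg_div.continuousOn
    fun x hx => ?_
  rw [interior_Iic, mem_Iio] at hx
  have : 0 < 1 - x / ρ := by rw [sub_pos, div_lt_one hρ]; exact hx
  rw [(hasDerivAt_mul_exp_neg_div x).deriv]
  positivity

theorem strictAntiOn_mul_exp_neg_div (hρ : 0 < ρ) :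
    StrictAntiOn (fun x => x * exp (-x / ρ)) (Ici ρ) := by
  refine strictAntiOn_of_deriv_neg (convex_Ici ρ) continuous_mul_exp_neg_div.continuousOn
    fun x hx => ?_
  rw [interior_Ici, mem_Ioi] at hx
  have : 1 - x / ρ < 0 := by rw [sub_neg, one_lt_div hρ]; exact hx
  rw [(hasDerivAt_mul_exp_neg_div x).deriv]
  exact mul_neg_of_pos_of_neg (exp_pos _) this

theorem lt_and_lt_of_mul_exp_neg_div_eq (hρ : 0 < ρ) {x y : ℝ} (hxy : x < y)
    (h : x * exp (-x / ρ) = y * exp (-y / ρ)) : x < ρ ∧ ρ < y := by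
  constructor
  · by_contra! hx
    exact (strictAntiOn_mul_exp_neg_div hρ hx (hx.trans hxy.le) hxy).ne' h
  · by_contra! hy
    exact (strictMonoOn_mul_exp_neg_div hρ (hxy.le.trans hy) hy hxy).ne h

theorem eq_of_mul_exp_neg_div_eq (hρ : 0 < ρ) {x y z : ℝ} (hxz : x ≠ z) (hyz : y ≠ z)
    (hx : x * exp (-x / ρ) = z * exp (-z / ρ)) (hy : y * exp (-y / ρ) = z * exp (-z / ρ)) :
    x = y := by
  rcases hxz.lt_or_gt with hxz | hxz <;> rcases hyz.lt_or_gt with hyz | hyz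
  · have := lt_and_lt_of_mul_exp_neg_div_eq hρ hxz hx
    have := lt_and_lt_of_mul_exp_neg_div_eq hρ hyz hy
    exact (strictMonoOn_mul_exp_neg_div hρ).injOn (mem_Iic.2 (by linarith))
      (mem_Iic.2 (by linarith)) (hx.trans hy.symm)
  · linarith [lt_and_lt_of_mul_exp_neg_div_eq hρ hxz hx,
      lt_and_lt_of_mul_exp_neg_div_eq hρ hyz hy.symm]
  · linarith [lt_and_lt_of_mul_exp_neg_div_eq hρ hxz hx.symm,
      lt_and_lt_of_mul_exp_neg_div_eq hρ hyz hy]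
  · have := lt_and_lt_of_mul_exp_neg_div_eq hρ hxz hx.symm
    have := lt_and_lt_of_mul_exp_neg_div_eq hρ hyz hy.symm
    exact (strictAntiOn_mul_exp_neg_div hρ).injOn (mem_Ici.2 (by linarith))
      (mem_Ici.2 (by linarith)) (hx.trans hy.symm)

theorem mul_exp_neg_div_eq_iff (x y : ℝ) :
    x * exp (-x / ρ) = y * exp (-y / ρ) ↔ y = x * exp ((y - x) / ρ) := by
  rw [show (y - x) / ρ = -x / ρ - -y / ρ by ring, exp_sub, ← mul_div_assoc,
    eq_div_iff (exp_pos _).ne', eq_comm]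

end MulExpNegDiv

theorem eq_mul_integral_exp_iff {ρ : ℝ} (hρ : 0 < ρ) (a b : ℝ) :
    ρ = a * ∫ x in (0 : ℝ)..1, exp ((b - a) * x / ρ) ↔
      (a = b ∧ b = ρ) ∨ (a ≠ b ∧ a * exp (-a / ρ) = b * exp (-b / ρ)) := by
  by_cases hab : a = b
  · subst hab
    simp [eq_comm]
  have hc : (b - a) / ρ ≠ 0 := div_ne_zero (sub_ne_zero.2 (Ne.symm hab)) hρ.ne'
  have hint : ∫ x in (0 : ℝ)..1, exp ((b - a) * x / ρ) =
      (exp ((b - a) / ρ) - 1) / ((b - a) / ρ) := by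
    simp only [mul_div_right_comm _ _ ρ]
    rw [integral_exp_const_mul hc, mul_one, mul_zero, exp_zero]
  rw [hint, mul_exp_neg_div_eq_iff, ← mul_div_assoc, eq_div_iff hc, mul_div_cancel₀ _ hρ.ne']
  constructor
  · intro h
    exact Or.inr ⟨hab, by linarith⟩
  · rintro (⟨h, -⟩ | ⟨-, h⟩)
    · exact absurd h hab
    · linarith

theorem eq_bstar_iff {ρ b bstar : ℝ} (hρ : 0 < ρ)
    (hbstar₁ : b = ρ → bstar = b)
    (hbstar₂ : b ≠ ρ → 0 < bstar ∧ bstar ≠ b ∧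
      bstar * exp (-bstar / ρ) = b * exp (-b / ρ)) (a : ℝ) :
    (a = b ∧ b = ρ) ∨ (a ≠ b ∧ a * exp (-a / ρ) = b * exp (-b / ρ)) ↔ a = bstar := by
  by_cases hbρ : b = ρ
  · rw [hbstar₁ hbρ]
    constructor
    · rintro (⟨h, -⟩ | ⟨hab, h⟩)
      · exact h
      · rcases hab.lt_or_gt with hab | hab
        · exact absurd hbρ (lt_and_lt_of_mul_exp_neg_div_eq hρ hab h).2.ne'
        · exact absurd hbρ (lt_and_lt_of_mul_exp_neg_div_eq hρ hab h.symm).1.ne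
    · exact fun h => Or.inl ⟨h, hbρ⟩
  · obtain ⟨-, hbstar, hbstar_eq⟩ := hbstar₂ hbρ
    constructor
    · rintro (⟨-, h⟩ | ⟨hab, h⟩)
      · exact absurd h hbρ
      · exact eq_of_mul_exp_neg_div_eq hρ hab hbstar h hbstar_eq
    · rintro rfl
      exact Or.inr ⟨hbstar, hbstar_eq⟩

theorem bstar_pos {ρ b bstar : ℝ} (hρ : 0 < ρ) (hbstar₁ : b = ρ → bstar = b)
    (hbstar₂ : b ≠ ρ → 0 < bstar ∧ bstar ≠ b ∧
      bstar * exp (-bstar / ρ) = b * exp (-b / ρ)) : 0 < bstar := by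
  by_cases hbρ : b = ρ
  · rw [hbstar₁ hbρ, hbρ]; exact hρ
  · exact (hbstar₂ hbρ).1

section IdDiv

variable {ω : ℝ → ℝ}

theorem strictMonoOn_id_div_of_antitoneOn (hpos : ∀ x ∈ Ici (0 : ℝ), 0 < ω x)
    (hanti : AntitoneOn ω (Ici 0)) : StrictMonoOn (fun x => x / ω x) (Ici 0) := by
  intro x hx y hy hxy
  calc x / ω x < y / ω x := div_lt_div_of_pos_right hxy (hpos x hx)
    _ ≤ y / ω y := div_le_div_of_nonneg_left hy (hpos y hy) (hanti hx hy hxy.le)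

theorem exists_pos_id_div_eq (hc : ContinuousOn ω (Ici 0)) (hpos : ∀ x ∈ Ici (0 : ℝ), 0 < ω x)
    (hanti : AntitoneOn ω (Ici 0)) {t : ℝ} (ht : 0 < t) : ∃ x, 0 < x ∧ x / ω x = t := by
  have hcont : ContinuousOn (fun x => x / ω x) (Ici 0) :=
    continuousOn_id.div hc fun x hx => (hpos x hx).ne'
  have htop : Tendsto (fun x => x / ω x) atTop atTop := by
    refine tendsto_atTop_mono' atTop ?_ (tendsto_id.atTop_div_const (hpos 0 self_mem_Ici))
    filter_upwards [eventually_ge_atTop 0] with x hx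
    exact div_le_div_of_nonneg_left hx (hpos x hx) (hanti self_mem_Ici hx hx)
  exact intermediate_value_Ioi hcont htop (by simpa using ht)

end IdDiv

theorem isNonzeroSteadyState4_iff {ρ b bstar : ℝ} (hρ : 0 < ρ) (hbstar₁ : b = ρ → bstar = b)
    (hbstar₂ : b ≠ ρ → 0 < bstar ∧ bstar ≠ b ∧
      bstar * exp (-bstar / ρ) = b * exp (-b / ρ)) (α ω : ℝ → ℝ) (A Ω : ℝ) :
    IsNonzeroSteadyState4 ρ b α ω A Ω ↔ 0 < A ∧ 0 < Ω ∧ α A = bstar ∧ A = bstar * Ω / ω Ω := by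
  simp only [IsNonzeroSteadyState4, eq_mul_integral_exp_iff hρ, eq_bstar_iff hρ hbstar₁ hbstar₂]
  constructor <;> rintro ⟨hA, hΩ, rfl, h⟩ <;> exact ⟨hA, hΩ, rfl, h⟩

theorem stmt1_general (ρ b : ℝ) (hρ : 0 < ρ) (α ω : ℝ → ℝ)
    (hαc : ContinuousOn α (Set.Ici 0)) (hωc : ContinuousOn ω (Set.Ici 0))
    (hωpos : ∀ A ∈ Set.Ici (0 : ℝ), 0 < ω A)
    (hαanti : StrictAntiOn α (Set.Ici 0)) (hωanti : StrictAntiOn ω (Set.Ici 0))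
    (hαlim : Filter.Tendsto α Filter.atTop (nhds 0))
    (bstar : ℝ)
    (hbstar₁ : b = ρ → bstar = b)
    (hbstar₂ : b ≠ ρ → 0 < bstar ∧ bstar ≠ b ∧
      bstar * Real.exp (-bstar / ρ) = b * Real.exp (-b / ρ)) :
    ((∃ A Ω : ℝ, IsNonzeroSteadyState4 ρ b α ω A Ω) ↔ α 0 > bstar) ∧
    (∀ A₁ Ω₁ A₂ Ω₂ : ℝ, IsNonzeroSteadyState4 ρ b α ω A₁ Ω₁ →
      IsNonzeroSteadyState4 ρ b α ω A₂ Ω₂ → A₁ = A₂ ∧ Ω₁ = Ω₂) ∧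
    (α 0 ≤ bstar → ¬ ∃ A Ω : ℝ, IsNonzeroSteadyState4 ρ b α ω A Ω) := by
  have hbstar := bstar_pos hρ hbstar₁ hbstar₂
  have hss := isNonzeroSteadyState4_iff hρ hbstar₁ hbstar₂ α ω
  have necessary : (∃ A Ω, IsNonzeroSteadyState4 ρ b α ω A Ω) → α 0 > bstar := by
    rintro ⟨A, Ω, h⟩
    obtain ⟨hA, -, rfl, -⟩ := (hss A Ω).1 h
    exact hαanti self_mem_Ici hA.le hA
  have sufficient : α 0 > bstar → ∃ A Ω, IsNonzeroSteadyState4 ρ b α ω A Ω := by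
    intro h
    obtain ⟨A, hA, hαA⟩ := intermediate_value_Ioi_of_tendsto hαc hαlim ⟨hbstar, h⟩
    obtain ⟨Ω, hΩ, hΩA⟩ := exists_pos_id_div_eq hωc hωpos hωanti.antitoneOn (div_pos hA hbstar)
    refine ⟨A, Ω, (hss A Ω).2 ⟨hA, hΩ, hαA, ?_⟩⟩
    rw [mul_div_assoc, hΩA, mul_div_cancel₀ _ hbstar.ne']
  refine ⟨⟨necessary, sufficient⟩, fun A₁ Ω₁ A₂ Ω₂ h₁ h₂ => ?_,
    fun h hex => (necessary hex).not_ge h⟩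
  obtain ⟨hA₁, hΩ₁, hα₁, h₁⟩ := (hss A₁ Ω₁).1 h₁
  obtain ⟨hA₂, hΩ₂, hα₂, h₂⟩ := (hss A₂ Ω₂).1 h₂
  have hA : A₁ = A₂ := hαanti.injOn hA₁.le hA₂.le (hα₁.trans hα₂.symm)
  refine ⟨hA, (strictMonoOn_id_div_of_antitoneOn hωpos hωanti.antitoneOn).injOn hΩ₁.le hΩ₂.le
    (mul_left_cancel₀ hbstar.ne' ?_)⟩
  rw [← mul_div_assoc, ← mul_div_assoc, ← h₁, ← h₂, hA]

/-- Let `ρ > 0`, `b > 0`, and let `α, ω : [0,∞) → (0,∞)` be continuous,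
bounded, strictly decreasing functions tending to `0` at infinity.  Let `b*` be defined
by `b* = b` if `b = ρ` and otherwise the unique positive number `b* ≠ b` with
`b* exp(−b*/ρ) = b exp(−b/ρ)`.  Then the Approximation 4 system has a nonzero steady
state iff `α 0 > b*`; when it exists it is unique; and if `α 0 ≤ b*` then zero is the
unique steady state (no nonzero steady state exists). -/
theorem stmt1 (ρ b : ℝ) (hρ : 0 < ρ) (hb : 0 < b) (α ω : ℝ → ℝ)
    (hαc : ContinuousOn α (Set.Ici 0)) (hωc : ContinuousOn ω (Set.Ici 0))
    (hαpos : ∀ A ∈ Set.Ici (0 : ℝ), 0 < α A)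
    (hωpos : ∀ A ∈ Set.Ici (0 : ℝ), 0 < ω A)
    (hαbdd : BddAbove (α '' Set.Ici 0)) (hωbdd : BddAbove (ω '' Set.Ici 0))
    (hαanti : StrictAntiOn α (Set.Ici 0)) (hωanti : StrictAntiOn ω (Set.Ici 0))
    (hαlim : Filter.Tendsto α Filter.atTop (nhds 0))
    (hωlim : Filter.Tendsto ω Filter.atTop (nhds 0))
    (bstar : ℝ)
    (hbstar₁ : b = ρ → bstar = b)
    (hbstar₂ : b ≠ ρ → 0 < bstar ∧ bstar ≠ b ∧
      bstar * Real.exp (-bstar / ρ) = b * Real.exp (-b / ρ)) :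
    ((∃ A Ω : ℝ, IsNonzeroSteadyState4 ρ b α ω A Ω) ↔ α 0 > bstar) ∧
    (∀ A₁ Ω₁ A₂ Ω₂ : ℝ, IsNonzeroSteadyState4 ρ b α ω A₁ Ω₁ →
      IsNonzeroSteadyState4 ρ b α ω A₂ Ω₂ → A₁ = A₂ ∧ Ω₁ = Ω₂) ∧
    (α 0 ≤ bstar → ¬ ∃ A Ω : ℝ, IsNonzeroSteadyState4 ρ b α ω A Ω) :=
  stmt1_general ρ b hρ α ω hαc hωc hωpos hαanti hωanti hαlim bstar hbstar₁ hbstar₂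
end

section
/- Let ρ_d > 0, b > 0, let ω : [0, ∞) → (0, ∞) be continuous, bounded, strictly decreasing to 0, and let α : [0,1] × [0, ∞) → (0, ∞) be continuous, bounded, and for each x ∈ [0,1] strictly decreasing to 0 in its second argument. Then the Approximation 3 system admits a nonzero steady state, and this steady state is unique, if and only if ∫₀¹ α(x, 0)·exp( (1/ρ_d)·∫₀ˣ (b − α(y, 0)) dy ) dx > ρ_d, equivalently ∫₀¹ exp( (1/ρ_d)·∫ₓ¹ (α(y, 0) − b) dy ) dx > ρ_d/b. Otherwise, zero is the only steady state. -/
/-!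
A steady state has profile `Ω*(0) e^{u(x, A*)}`. Integrating `(e^u)' = (b − α) e^u / ρ` over
`[0, 1]` gives `∫ α e^u − ρ = e^{u(1)} (b G(A) − ρ)` with
`G(A) = ∫₀¹ exp((1/ρ) ∫ₓ¹ (α(y, A) − b) dy) dx`; hence the two criteria agree and `A*` is exactly a
root of `G = ρ/b`. `G` is continuous and strictly decreasing, and `G(A) ≤ e^{∫α(·, A)/ρ} G₀` where
`G₀ < ρ/b` is its value for `α ≡ 0` and `∫α(·, A) → 0`; so a positive root exists iff
`G(0) > ρ/b`, and it is unique. Given `A*`, the boundary condition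
`ρ Ω*(0) = ω(Ω*(0) ∫e^u) A*` has exactly one positive solution, its left side increasing and its
right side decreasing in `Ω*(0)`.
-/

open Real Set Filter

/-- The exponent `u(x, A) = (1/ρ) ∫₀ˣ (b − α(y, A)) dy` appearing in the steady-state
profile of the Approximation 3 system. -/
noncomputable def uExp (ρ b : ℝ) (α : ℝ → ℝ → ℝ) (A x : ℝ) : ℝ :=
  (1 / ρ) * ∫ y in (0 : ℝ)..x, (b - α y A)

/-- A nonzero steady state of the Approximation 3 system, expressed via the reduced
algebraic system for `(A*, Ω*(0))`: the profile is
`Ω*(x) = Ω*(0) exp(u(x, A*))`, with `ρ = ∫₀¹ α(x, A*) exp(u(x, A*)) dx` and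
`ρ Ω*(0) = ω(Ω̄) A*` where `Ω̄ = Ω*(0) ∫₀¹ exp(u(x, A*)) dx`. -/
def IsNonzeroSteadyState3 (ρ b : ℝ) (α : ℝ → ℝ → ℝ) (ω : ℝ → ℝ)
    (A Ω0 : ℝ) : Prop :=
  0 < A ∧ 0 < Ω0 ∧
  ρ = (∫ x in (0 : ℝ)..1, α x A * Real.exp (uExp ρ b α A x)) ∧
  ρ * Ω0 = ω (Ω0 * ∫ x in (0 : ℝ)..1, Real.exp (uExp ρ b α A x)) * A

open Function

/- For the profile `Ω* = Ω*(0) e^u`, `profileFlux` and `profileMass` are `∫ α Ω* / Ω*(0)` and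
`Ω̄ / Ω*(0)`, while `tailMass = e^{-u(1)} profileMass` is the integral of the second criterion. -/

noncomputable def tailExp (ρ b : ℝ) (β : ℝ → ℝ → ℝ) (A x : ℝ) : ℝ :=
  (1 / ρ) * ∫ y in x..(1 : ℝ), (β y A - b)

noncomputable def tailMass (ρ b : ℝ) (β : ℝ → ℝ → ℝ) (A : ℝ) : ℝ :=
  ∫ x in (0 : ℝ)..1, exp (tailExp ρ b β A x)

noncomputable def profileFlux (ρ b : ℝ) (β : ℝ → ℝ → ℝ) (A : ℝ) : ℝ :=
  ∫ x in (0 : ℝ)..1, β x A * exp (uExp ρ b β A x)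

noncomputable def profileMass (ρ b : ℝ) (β : ℝ → ℝ → ℝ) (A : ℝ) : ℝ :=
  ∫ x in (0 : ℝ)..1, exp (uExp ρ b β A x)

section Slice

variable {ρ b A : ℝ} {β : ℝ → ℝ → ℝ}

lemma hasDerivAt_uExp (hβ : Continuous fun y => β y A) (x : ℝ) :
    HasDerivAt (uExp ρ b β A) ((1 / ρ) * (b - β x A)) x := by
  have hf : Continuous fun y => b - β y A := continuous_const.sub hβ
  exact (intervalIntegral.integral_hasDerivAt_right (hf.intervalIntegrable 0 x)
    (hf.stronglyMeasurableAtFilter _ _) hf.continuousAt).const_mul (1 / ρ)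

lemma continuous_uExp (hβ : Continuous fun y => β y A) : Continuous (uExp ρ b β A) :=
  continuous_iff_continuousAt.2 fun x => (hasDerivAt_uExp hβ x).continuousAt

lemma uExp_eq_add_tailExp (hβ : Continuous fun y => β y A) (x : ℝ) :
    uExp ρ b β A x = uExp ρ b β A 1 + tailExp ρ b β A x := by
  have hf : Continuous fun y => b - β y A := continuous_const.sub hβ
  have hflip : ∫ y in x..(1 : ℝ), (β y A - b) = ∫ y in (1 : ℝ)..x, (b - β y A) := by
    rw [intervalIntegral.integral_symm x 1, ← intervalIntegral.integral_neg]
    simp only [neg_sub]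
  rw [uExp, uExp, tailExp, hflip, ← mul_add,
    intervalIntegral.integral_add_adjacent_intervals (hf.intervalIntegrable 0 1)
      (hf.intervalIntegrable 1 x)]

lemma continuous_tailExp (hβ : Continuous fun y => β y A) : Continuous (tailExp ρ b β A) := by
  have h : tailExp ρ b β A = fun x => uExp ρ b β A x - uExp ρ b β A 1 := by
    ext x
    rw [uExp_eq_add_tailExp hβ x, add_sub_cancel_left]
  exact h ▸ (continuous_uExp hβ).sub continuous_const

lemma profileMass_eq_mul_tailMass (hβ : Continuous fun y => β y A) :
    profileMass ρ b β A = exp (uExp ρ b β A 1) * tailMass ρ b β A := by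
  rw [profileMass, tailMass, ← intervalIntegral.integral_const_mul]
  congr 1 with x
  rw [uExp_eq_add_tailExp hβ x, exp_add]

lemma profileMass_pos (hβ : Continuous fun y => β y A) : 0 < profileMass ρ b β A :=
  intervalIntegral.intervalIntegral_pos_of_pos_on
    ((continuous_uExp hβ).rexp.intervalIntegrable 0 1) (fun _ _ => exp_pos _) one_pos

/-- Integrating `(e^u)' = (b - β) e^u / ρ` over `[0, 1]`. -/
lemma profileFlux_sub_eq (hρ : ρ ≠ 0) (hβ : Continuous fun y => β y A) :
    profileFlux ρ b β A - ρ = exp (uExp ρ b β A 1) * (b * tailMass ρ b β A - ρ) := by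
  have hu := continuous_uExp (ρ := ρ) (b := b) hβ
  have hftc : ∫ x in (0 : ℝ)..1, (b - β x A) * exp (uExp ρ b β A x)
      = ρ * (exp (uExp ρ b β A 1) - 1) := by
    have h := intervalIntegral.integral_eq_sub_of_hasDerivAt
      (fun x _ => (hasDerivAt_uExp (ρ := ρ) (b := b) hβ x).exp)
      ((hu.rexp.mul (continuous_const.mul (continuous_const.sub hβ))).intervalIntegrable 0 1)
    rw [show uExp ρ b β A 0 = 0 by simp [uExp], exp_zero] at h
    rw [← h, ← intervalIntegral.integral_const_mul]
    congr 1 with x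
    field_simp
  have hsplit : ∫ x in (0 : ℝ)..1, (b - β x A) * exp (uExp ρ b β A x)
      = b * profileMass ρ b β A - profileFlux ρ b β A := by
    simp only [sub_mul]
    have hflux : Continuous fun x => β x A * exp (uExp ρ b β A x) := hβ.mul hu.rexp
    have hmass : Continuous fun x => b * exp (uExp ρ b β A x) := continuous_const.mul hu.rexp
    rw [intervalIntegral.integral_sub (hmass.intervalIntegrable 0 1)
      (hflux.intervalIntegrable 0 1), intervalIntegral.integral_const_mul, profileMass,
      profileFlux]
  rw [profileMass_eq_mul_tailMass hβ] at hsplit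
  linear_combination hsplit - hftc

lemma lt_profileFlux_iff (hρ : ρ ≠ 0) (hb : 0 < b) (hβ : Continuous fun y => β y A) :
    ρ < profileFlux ρ b β A ↔ ρ / b < tailMass ρ b β A := by
  rw [← sub_pos, profileFlux_sub_eq hρ hβ, mul_pos_iff_of_pos_left (exp_pos _), sub_pos,
    div_lt_iff₀ hb, mul_comm]

lemma profileFlux_eq_iff (hρ : ρ ≠ 0) (hb : b ≠ 0) (hβ : Continuous fun y => β y A) :
    profileFlux ρ b β A = ρ ↔ tailMass ρ b β A = ρ / b := by
  rw [← sub_eq_zero, profileFlux_sub_eq hρ hβ, mul_eq_zero, or_iff_right (exp_ne_zero _),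
    sub_eq_zero, eq_div_iff hb, mul_comm]

/-- For `β ≡ 0` the flux vanishes, so `profileFlux_sub_eq` forces `b * tailMass < ρ`. -/
lemma tailMass_zero_lt (hρ : 0 < ρ) (hb : 0 < b) :
    tailMass ρ b (fun _ _ => 0) A < ρ / b := by
  have h := profileFlux_sub_eq (β := fun _ _ => 0) (A := A) (b := b) hρ.ne' continuous_const
  simp only [profileFlux, zero_mul, intervalIntegral.integral_zero, zero_sub] at h
  rw [lt_div_iff₀ hb]
  nlinarith [exp_pos (uExp ρ b (fun _ _ => 0) A 1)]

end Slice

section Parametric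

variable {ρ b : ℝ} {β : ℝ → ℝ → ℝ}

lemma continuous_tailMass (hβ : Continuous (uncurry β)) : Continuous (tailMass ρ b β) := by
  have h : ∀ A x, tailExp ρ b β A x
      = 1 / ρ * ((∫ y in (0 : ℝ)..1, (β y A - b)) - ∫ y in (0 : ℝ)..x, (β y A - b)) := by
    intro A x
    have hc : Continuous fun y => β y A - b := (hβ.uncurry_right A).sub continuous_const
    rw [tailExp, intervalIntegral.integral_interval_sub_left (hc.intervalIntegrable 0 1)
      (hc.intervalIntegrable 0 x)]
  show Continuous fun A => ∫ x in (0 : ℝ)..1, exp (tailExp ρ b β A x)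
  simp only [h]
  fun_prop

lemma tailMass_strictAntiOn (hρ : 0 < ρ) {s : Set ℝ} (hβ : ∀ A ∈ s, Continuous fun y => β y A)
    (hanti : ∀ y ∈ Icc (0 : ℝ) 1, StrictAntiOn (β y) s) :
    StrictAntiOn (tailMass ρ b β) s := by
  intro A₁ hA₁ A₂ hA₂ hA
  have hc₁ : Continuous fun y => β y A₁ - b := (hβ A₁ hA₁).sub continuous_const
  have hc₂ : Continuous fun y => β y A₂ - b := (hβ A₂ hA₂).sub continuous_const
  have hlt : ∀ y ∈ Icc (0 : ℝ) 1, β y A₂ - b < β y A₁ - b :=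
    fun y hy => sub_lt_sub_right (hanti y hy hA₁ hA₂ hA) b
  have hle : ∀ x ∈ Ioc (0 : ℝ) 1, exp (tailExp ρ b β A₂ x) ≤ exp (tailExp ρ b β A₁ x) :=
    fun x hx => exp_le_exp.2 <| mul_le_mul_of_nonneg_left
      (intervalIntegral.integral_mono_on hx.2 (hc₂.intervalIntegrable x 1)
        (hc₁.intervalIntegrable x 1) fun y hy => (hlt y ⟨hx.1.le.trans hy.1, hy.2⟩).le)
      (by positivity)
  have hlt₀ : exp (tailExp ρ b β A₂ 0) < exp (tailExp ρ b β A₁ 0) :=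
    exp_lt_exp.2 <| mul_lt_mul_of_pos_left
      (intervalIntegral.integral_lt_integral_of_continuousOn_of_le_of_exists_lt one_pos
        hc₂.continuousOn hc₁.continuousOn (fun y hy => (hlt y (Ioc_subset_Icc_self hy)).le)
        ⟨0, left_mem_Icc.2 zero_le_one, hlt 0 (left_mem_Icc.2 zero_le_one)⟩)
      (by positivity)
  exact intervalIntegral.integral_lt_integral_of_continuousOn_of_le_of_exists_lt one_pos
    (continuous_tailExp (hβ A₂ hA₂)).rexp.continuousOn
    (continuous_tailExp (hβ A₁ hA₁)).rexp.continuousOn hle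
    ⟨0, left_mem_Icc.2 zero_le_one, hlt₀⟩

lemma tendsto_intervalIntegral_atTop_zero (hβ : Continuous (uncurry β))
    (hnn : ∀ y ∈ Icc (0 : ℝ) 1, ∀ A ∈ Ici (0 : ℝ), 0 ≤ β y A)
    (hanti : ∀ y ∈ Icc (0 : ℝ) 1, AntitoneOn (β y) (Ici 0))
    (hlim : ∀ y ∈ Icc (0 : ℝ) 1, Tendsto (β y) atTop (nhds 0)) :
    Tendsto (fun A => ∫ y in (0 : ℝ)..1, β y A) atTop (nhds 0) := by
  have hmem : ∀ y ∈ Set.uIoc (0 : ℝ) 1, y ∈ Icc (0 : ℝ) 1 := fun y hy =>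
    Ioc_subset_Icc_self (by rwa [uIoc_of_le zero_le_one] at hy)
  simpa using intervalIntegral.tendsto_integral_filter_of_dominated_convergence
    (F := fun A y => β y A) (fun y => β y 0)
    (Eventually.of_forall fun A => (hβ.uncurry_right A).aestronglyMeasurable)
    ((eventually_ge_atTop 0).mono fun A hA => MeasureTheory.ae_of_all _ fun y hy => by
      rw [Real.norm_of_nonneg (hnn y (hmem y hy) A hA)]
      exact hanti y (hmem y hy) self_mem_Ici hA hA)
    ((hβ.uncurry_right 0).intervalIntegrable 0 1)
    (MeasureTheory.ae_of_all _ fun y hy => hlim y (hmem y hy))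

lemma tailMass_le_exp_mul {A : ℝ} (hρ : 0 < ρ) (hβ : Continuous fun y => β y A)
    (hnn : ∀ y ∈ Icc (0 : ℝ) 1, 0 ≤ β y A) :
    tailMass ρ b β A
      ≤ exp ((∫ y in (0 : ℝ)..1, β y A) / ρ) * tailMass ρ b (fun _ _ => 0) A := by
  have hpt : ∀ x ∈ Icc (0 : ℝ) 1, tailExp ρ b β A x
      ≤ (∫ y in (0 : ℝ)..1, β y A) / ρ + tailExp ρ b (fun _ _ => 0) A x := by
    intro x hx
    have hsub : tailExp ρ b β A x - tailExp ρ b (fun _ _ => 0) A x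
        = (∫ y in x..(1 : ℝ), β y A) / ρ := by
      simp only [tailExp, intervalIntegral.integral_sub (hβ.intervalIntegrable x 1)
        intervalIntegrable_const, zero_sub, intervalIntegral.integral_neg]
      ring
    have htail : ∫ y in x..(1 : ℝ), β y A ≤ ∫ y in (0 : ℝ)..1, β y A := by
      rw [← intervalIntegral.integral_add_adjacent_intervals (hβ.intervalIntegrable 0 x)
        (hβ.intervalIntegrable x 1), le_add_iff_nonneg_left]
      exact intervalIntegral.integral_nonneg hx.1 fun y hy => hnn y ⟨hy.1, hy.2.trans hx.2⟩
    have := div_le_div_of_nonneg_right htail hρ.le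
    linarith
  rw [tailMass, tailMass, ← intervalIntegral.integral_const_mul]
  refine intervalIntegral.integral_mono_on zero_le_one
    ((continuous_tailExp hβ).rexp.intervalIntegrable 0 1)
    ((continuous_const.mul (continuous_tailExp (β := fun _ _ => 0) continuous_const).rexp
      ).intervalIntegrable 0 1)
    fun x hx => ?_
  rw [← exp_add]
  exact exp_le_exp.2 (hpt x hx)

lemma eventually_tailMass_lt (hρ : 0 < ρ) (hb : 0 < b) (hβ : Continuous (uncurry β))
    (hnn : ∀ y ∈ Icc (0 : ℝ) 1, ∀ A ∈ Ici (0 : ℝ), 0 ≤ β y A)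
    (hanti : ∀ y ∈ Icc (0 : ℝ) 1, AntitoneOn (β y) (Ici 0))
    (hlim : ∀ y ∈ Icc (0 : ℝ) 1, Tendsto (β y) atTop (nhds 0)) :
    ∀ᶠ A in atTop, tailMass ρ b β A < ρ / b := by
  have hbound : Tendsto (fun A => exp ((∫ y in (0 : ℝ)..1, β y A) / ρ)
      * tailMass ρ b (fun _ _ => 0) 0) atTop (nhds (tailMass ρ b (fun _ _ => 0) 0)) := by
    simpa using ((tendsto_intervalIntegral_atTop_zero hβ hnn hanti hlim).div_const ρ).rexp
      |>.mul_const (tailMass ρ b (fun _ _ => 0) 0)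
  filter_upwards [hbound.eventually_lt_const (tailMass_zero_lt hρ hb), eventually_ge_atTop 0]
    with A hA hA₀
  exact (tailMass_le_exp_mul hρ (hβ.uncurry_right A) fun y hy => hnn y hy A hA₀).trans_lt hA

end Parametric

section Balance

variable {ω : ℝ → ℝ} {ρ I A : ℝ}

lemma strictMonoOn_mul_sub_mul (hρ : 0 < ρ) (hI : 0 ≤ I) (hA : 0 ≤ A)
    (hω : AntitoneOn ω (Ici 0)) : StrictMonoOn (fun t => ρ * t - ω (t * I) * A) (Ici 0) :=
  fun t ht s hs hts => by
    have hωts : ω (s * I) * A ≤ ω (t * I) * A := mul_le_mul_of_nonneg_right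
      (hω (mul_nonneg ht hI) (mul_nonneg hs hI) (mul_le_mul_of_nonneg_right hts.le hI)) hA
    have := mul_lt_mul_of_pos_left hts hρ
    linarith

lemma exists_pos_mul_eq (hρ : 0 < ρ) (hI : 0 ≤ I) (hA : 0 < A)
    (hωc : ContinuousOn ω (Ici 0)) (hω₀ : 0 < ω 0) (hω : AntitoneOn ω (Ici 0)) :
    ∃ t, 0 < t ∧ ρ * t = ω (t * I) * A := by
  set φ : ℝ → ℝ := fun t => ρ * t - ω (t * I) * A
  have hT : 0 ≤ ω 0 * A / ρ := by positivity
  have hφc : ContinuousOn φ (Icc 0 (ω 0 * A / ρ)) :=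
    (continuousOn_const.mul continuousOn_id).sub <|
      (hωc.comp (continuousOn_id.mul continuousOn_const) fun t ht => mul_nonneg ht.1 hI).mul
        continuousOn_const
  have hφ₀ : φ 0 < 0 := by simp only [φ, zero_mul, mul_zero, zero_sub]; nlinarith
  -- `ω ≤ ω 0` on `[0, ∞)`, so `ρ t` has caught up with `ω (t * I) * A` at `t = ω 0 * A / ρ`
  have hφT : 0 ≤ φ (ω 0 * A / ρ) := by
    simp only [φ, mul_div_cancel₀ _ hρ.ne', sub_nonneg]
    exact mul_le_mul_of_nonneg_right
      (hω self_mem_Ici (mul_nonneg hT hI) (mul_nonneg hT hI)) hA.le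
  obtain ⟨t, ht, hφt⟩ := intermediate_value_Icc hT hφc ⟨hφ₀.le, hφT⟩
  refine ⟨t, ht.1.lt_of_ne ?_, sub_eq_zero.1 hφt⟩
  rintro rfl
  exact hφ₀.ne hφt

end Balance

section SteadyState

variable {ρ b A Ω0 : ℝ} {α β : ℝ → ℝ → ℝ} {ω : ℝ → ℝ}

lemma uExp_congr (h : EqOn (α · A) (β · A) (Icc 0 1)) {x : ℝ} (hx : x ∈ Icc (0 : ℝ) 1) :
    uExp ρ b α A x = uExp ρ b β A x := by
  rw [uExp, uExp, intervalIntegral.integral_congr fun y hy => ?_]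
  rw [uIcc_of_le hx.1] at hy
  rw [show α y A = β y A from h ⟨hy.1, hy.2.trans hx.2⟩]

lemma profileFlux_congr (h : EqOn (α · A) (β · A) (Icc 0 1)) :
    profileFlux ρ b α A = profileFlux ρ b β A := by
  refine intervalIntegral.integral_congr fun x hx => ?_
  rw [uIcc_of_le zero_le_one] at hx
  rw [show α x A = β x A from h hx, uExp_congr h hx]

lemma profileMass_congr (h : EqOn (α · A) (β · A) (Icc 0 1)) :
    profileMass ρ b α A = profileMass ρ b β A := by
  refine intervalIntegral.integral_congr fun x hx => ?_
  rw [uIcc_of_le zero_le_one] at hx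
  rw [uExp_congr h hx]

lemma tailMass_congr (h : EqOn (α · A) (β · A) (Icc 0 1)) :
    tailMass ρ b α A = tailMass ρ b β A := by
  refine intervalIntegral.integral_congr fun x hx => ?_
  rw [uIcc_of_le zero_le_one] at hx
  rw [tailExp, tailExp, intervalIntegral.integral_congr fun y hy => ?_]
  rw [uIcc_of_le hx.2] at hy
  rw [show α y A = β y A from h ⟨hx.1.trans hy.1, hy.2⟩]

lemma isNonzeroSteadyState3_congr (h : ∀ A ∈ Ici (0 : ℝ), EqOn (α · A) (β · A) (Icc 0 1)) :
    IsNonzeroSteadyState3 ρ b α ω A Ω0 ↔ IsNonzeroSteadyState3 ρ b β ω A Ω0 := by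
  refine and_congr_right fun hA => and_congr_right fun _ => ?_
  change ρ = profileFlux ρ b α A ∧ ρ * Ω0 = ω (Ω0 * profileMass ρ b α A) * A ↔
    ρ = profileFlux ρ b β A ∧ ρ * Ω0 = ω (Ω0 * profileMass ρ b β A) * A
  rw [profileFlux_congr (h A hA.le), profileMass_congr (h A hA.le)]

lemma isNonzeroSteadyState3_iff (hρ : ρ ≠ 0) (hb : b ≠ 0) (hβ : Continuous fun y => β y A) :
    IsNonzeroSteadyState3 ρ b β ω A Ω0 ↔ 0 < A ∧ 0 < Ω0 ∧ tailMass ρ b β A = ρ / b ∧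
      ρ * Ω0 = ω (Ω0 * profileMass ρ b β A) * A := by
  rw [← profileFlux_eq_iff hρ hb hβ, eq_comm]
  rfl

lemma exists_isNonzeroSteadyState3_iff (hρ : 0 < ρ) (hb : 0 < b) (hβ : Continuous (uncurry β))
    (hnn : ∀ y ∈ Icc (0 : ℝ) 1, ∀ A ∈ Ici (0 : ℝ), 0 ≤ β y A)
    (hanti : ∀ y ∈ Icc (0 : ℝ) 1, StrictAntiOn (β y) (Ici 0))
    (hlim : ∀ y ∈ Icc (0 : ℝ) 1, Tendsto (β y) atTop (nhds 0))
    (hωc : ContinuousOn ω (Ici 0)) (hω₀ : 0 < ω 0) (hω : AntitoneOn ω (Ici 0)) :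
    (∃ A Ω0, IsNonzeroSteadyState3 ρ b β ω A Ω0) ↔ ρ < profileFlux ρ b β 0 := by
  have hslice : ∀ A, Continuous fun y => β y A := fun A => hβ.uncurry_right A
  have hG := tailMass_strictAntiOn (b := b) hρ (fun A _ => hslice A) hanti
  simp only [lt_profileFlux_iff hρ.ne' hb (hslice 0),
    isNonzeroSteadyState3_iff hρ.ne' hb.ne' (hslice _)]
  constructor
  · rintro ⟨A, -, hA, -, hGA, -⟩
    exact hGA ▸ hG self_mem_Ici hA.le hA
  · intro hG₀
    obtain ⟨A₁, hA₁, hA₁₀⟩ := (eventually_tailMass_lt hρ hb hβ hnn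
      (fun y hy => (hanti y hy).antitoneOn) hlim |>.and (eventually_ge_atTop 0)).exists
    obtain ⟨A, hA, hGA⟩ := intermediate_value_Icc' hA₁₀ (continuous_tailMass hβ).continuousOn
      ⟨hA₁.le, hG₀.le⟩
    have hA₀ : 0 < A := hA.1.lt_of_ne <| by
      rintro rfl
      exact hG₀.ne' hGA
    obtain ⟨Ω0, hΩ0, hbal⟩ :=
      exists_pos_mul_eq hρ (profileMass_pos (hslice A)).le hA₀ hωc hω₀ hω
    exact ⟨A, Ω0, hA₀, hΩ0, hGA, hbal⟩

lemma IsNonzeroSteadyState3.unique {A₁ Ω₁ A₂ Ω₂ : ℝ} (hρ : 0 < ρ) (hb : 0 < b)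
    (hβ : ∀ A, Continuous fun y => β y A)
    (hanti : ∀ y ∈ Icc (0 : ℝ) 1, StrictAntiOn (β y) (Ici 0)) (hω : AntitoneOn ω (Ici 0))
    (h₁ : IsNonzeroSteadyState3 ρ b β ω A₁ Ω₁) (h₂ : IsNonzeroSteadyState3 ρ b β ω A₂ Ω₂) :
    A₁ = A₂ ∧ Ω₁ = Ω₂ := by
  rw [isNonzeroSteadyState3_iff hρ.ne' hb.ne' (hβ _)] at h₁ h₂
  obtain ⟨hA₁, hΩ₁, hG₁, hbal₁⟩ := h₁
  obtain ⟨hA₂, hΩ₂, hG₂, hbal₂⟩ := h₂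
  obtain rfl : A₁ = A₂ := (tailMass_strictAntiOn hρ (fun A _ => hβ A) hanti).injOn
    hA₁.le hA₂.le (hG₁.trans hG₂.symm)
  have hI := (profileMass_pos (ρ := ρ) (b := b) (hβ A₁)).le
  refine ⟨rfl, (strictMonoOn_mul_sub_mul hρ hI hA₁.le hω).injOn hΩ₁.le hΩ₂.le ?_⟩
  simp only [hbal₁, hbal₂, sub_self]

end SteadyState

/-- Continuous extension of `α` from `[0, 1] × [0, ∞)` to `ℝ²`, so that the results on
parametric integrals of continuous functions apply. -/
def clampExtend (α : ℝ → ℝ → ℝ) (y A : ℝ) : ℝ :=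
  α (max 0 (min y 1)) (max 0 A)

lemma clampExtend_of_mem {α : ℝ → ℝ → ℝ} {y A : ℝ} (hy : y ∈ Icc (0 : ℝ) 1)
    (hA : A ∈ Ici (0 : ℝ)) : clampExtend α y A = α y A := by
  rw [clampExtend, min_eq_left hy.2, max_eq_right hy.1, max_eq_right hA]

lemma continuous_clampExtend {α : ℝ → ℝ → ℝ}
    (hα : ContinuousOn (uncurry α) (Icc 0 1 ×ˢ Ici 0)) : Continuous (uncurry (clampExtend α)) :=
  hα.comp_continuous (f := fun p : ℝ × ℝ => (max 0 (min p.1 1), max 0 p.2)) (by fun_prop)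
    fun p => ⟨⟨le_max_left _ _, max_le zero_le_one (min_le_right _ _)⟩,
      mem_Ici.2 (le_max_left _ _)⟩

theorem stmt2_general (ρ b : ℝ) (hρ : 0 < ρ) (hb : 0 < b)
    (ω : ℝ → ℝ) (α : ℝ → ℝ → ℝ)
    (hωc : ContinuousOn ω (Set.Ici 0))
    (hωpos : ∀ A ∈ Set.Ici (0 : ℝ), 0 < ω A)
    (hωanti : StrictAntiOn ω (Set.Ici 0))
    (hαc : ContinuousOn (fun p : ℝ × ℝ => α p.1 p.2) (Set.Icc 0 1 ×ˢ Set.Ici 0))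
    (hαpos : ∀ x ∈ Set.Icc (0 : ℝ) 1, ∀ A ∈ Set.Ici (0 : ℝ), 0 < α x A)
    (hαanti : ∀ x ∈ Set.Icc (0 : ℝ) 1, StrictAntiOn (α x) (Set.Ici 0))
    (hαlim : ∀ x ∈ Set.Icc (0 : ℝ) 1, Filter.Tendsto (α x) Filter.atTop (nhds 0)) :
    ((∃ A Ω0 : ℝ, IsNonzeroSteadyState3 ρ b α ω A Ω0) ↔
        (∫ x in (0 : ℝ)..1, α x 0 * Real.exp (uExp ρ b α 0 x)) > ρ) ∧
    ((∫ x in (0 : ℝ)..1, α x 0 * Real.exp (uExp ρ b α 0 x)) > ρ ↔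
        (∫ x in (0 : ℝ)..1,
          Real.exp ((1 / ρ) * ∫ y in x..(1 : ℝ), (α y 0 - b))) > ρ / b) ∧
    (∀ A₁ Ω₁ A₂ Ω₂ : ℝ, IsNonzeroSteadyState3 ρ b α ω A₁ Ω₁ →
        IsNonzeroSteadyState3 ρ b α ω A₂ Ω₂ → A₁ = A₂ ∧ Ω₁ = Ω₂) := by
  set β := clampExtend α
  have hβ : Continuous (uncurry β) := continuous_clampExtend hαc
  have hαβ : ∀ A ∈ Ici (0 : ℝ), EqOn (α · A) (β · A) (Icc 0 1) :=
    fun A hA y hy => (clampExtend_of_mem hy hA).symm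
  have hanti : ∀ y ∈ Icc (0 : ℝ) 1, StrictAntiOn (β y) (Ici 0) :=
    fun y hy => (hαanti y hy).congr fun A hA => hαβ A hA hy
  have hnn : ∀ y ∈ Icc (0 : ℝ) 1, ∀ A ∈ Ici (0 : ℝ), 0 ≤ β y A :=
    fun y hy A hA => (hαpos y hy A hA).le.trans_eq (hαβ A hA hy)
  have hlim : ∀ y ∈ Icc (0 : ℝ) 1, Tendsto (β y) atTop (nhds 0) := fun y hy =>
    (hαlim y hy).congr' <| (eventually_ge_atTop 0).mono fun A hA => hαβ A hA hy
  change (_ ↔ ρ < profileFlux ρ b α 0) ∧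
    (ρ < profileFlux ρ b α 0 ↔ ρ / b < tailMass ρ b α 0) ∧ _
  simp only [isNonzeroSteadyState3_congr hαβ, profileFlux_congr (hαβ 0 self_mem_Ici),
    tailMass_congr (hαβ 0 self_mem_Ici)]
  exact ⟨exists_isNonzeroSteadyState3_iff hρ hb hβ hnn hanti hlim hωc (hωpos 0 self_mem_Ici)
      hωanti.antitoneOn,
    lt_profileFlux_iff hρ.ne' hb (hβ.uncurry_right 0),
    fun _ _ _ _ => IsNonzeroSteadyState3.unique hρ hb (hβ.uncurry_right ·) hanti
      hωanti.antitoneOn⟩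

/-- Let `ρ > 0`, `b > 0`, let `ω : [0,∞) → (0,∞)` be continuous, bounded,
strictly decreasing to `0`, and let `α : [0,1] × [0,∞) → (0,∞)` be continuous, bounded,
and for each `x` strictly decreasing to `0` in its second argument.  Then the
Approximation 3 system admits a nonzero steady state, and it is unique, iff
`∫₀¹ α(x,0) exp((1/ρ) ∫₀ˣ (b − α(y,0)) dy) dx > ρ`, equivalently
`∫₀¹ exp((1/ρ) ∫ₓ¹ (α(y,0) − b) dy) dx > ρ/b`.  Otherwise zero is the only steady
state. -/
theorem stmt2 (ρ b : ℝ) (hρ : 0 < ρ) (hb : 0 < b)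
    (ω : ℝ → ℝ) (α : ℝ → ℝ → ℝ)
    (hωc : ContinuousOn ω (Set.Ici 0))
    (hωpos : ∀ A ∈ Set.Ici (0 : ℝ), 0 < ω A)
    (hωbdd : BddAbove (ω '' Set.Ici 0))
    (hωanti : StrictAntiOn ω (Set.Ici 0))
    (hωlim : Filter.Tendsto ω Filter.atTop (nhds 0))
    (hαc : ContinuousOn (fun p : ℝ × ℝ => α p.1 p.2) (Set.Icc 0 1 ×ˢ Set.Ici 0))
    (hαpos : ∀ x ∈ Set.Icc (0 : ℝ) 1, ∀ A ∈ Set.Ici (0 : ℝ), 0 < α x A)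
    (hαbdd : ∃ M : ℝ, ∀ x ∈ Set.Icc (0 : ℝ) 1, ∀ A ∈ Set.Ici (0 : ℝ), α x A ≤ M)
    (hαanti : ∀ x ∈ Set.Icc (0 : ℝ) 1, StrictAntiOn (α x) (Set.Ici 0))
    (hαlim : ∀ x ∈ Set.Icc (0 : ℝ) 1, Filter.Tendsto (α x) Filter.atTop (nhds 0)) :
    ((∃ A Ω0 : ℝ, IsNonzeroSteadyState3 ρ b α ω A Ω0) ↔
        (∫ x in (0 : ℝ)..1, α x 0 * Real.exp (uExp ρ b α 0 x)) > ρ) ∧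
    ((∫ x in (0 : ℝ)..1, α x 0 * Real.exp (uExp ρ b α 0 x)) > ρ ↔
        (∫ x in (0 : ℝ)..1,
          Real.exp ((1 / ρ) * ∫ y in x..(1 : ℝ), (α y 0 - b))) > ρ / b) ∧
    (∀ A₁ Ω₁ A₂ Ω₂ : ℝ, IsNonzeroSteadyState3 ρ b α ω A₁ Ω₁ →
        IsNonzeroSteadyState3 ρ b α ω A₂ Ω₂ → A₁ = A₂ ∧ Ω₁ = Ω₂) :=
  stmt2_general ρ b hρ hb ω α hωc hωpos hωanti hαc hαpos hαanti hαlim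
end

section
/- Let ρ_d > 0, ω > 0, b ∈ ℝ, and let α : [0,1] → (0, ∞) be continuous. Then there exists a unique real number λ solving the eigenvalue relation ρ_d·(λ/ω + 1) = ∫₀¹ α(x)·exp( (1/ρ_d)·∫₀ˣ (b − α(s) − λ) ds ) dx; equivalently, the eigenvalue problem ρ_d Ω'(x) = (b − λ − α(x))Ω(x) on [0,1], 0 = ∫₀¹ α(x)Ω(x) dx − (λ + ω)A, Ω(0) = ωA/ρ_d, ∫₀¹ Ω(x) dx = 1 has a unique solution (λ, Ω, A) with Ω > 0 and A > 0, and λ real is unique. Moreover λ > 0 if and only if ∫₀¹ α(x)·exp( (1/ρ_d)·∫₀ˣ (b − α(s)) ds ) dx > ρ_d, and λ < 0 if and only if ∫₀¹ α(x)·exp( (1/ρ_d)·∫₀ˣ (b − α(s)) ds ) dx < ρ_d. -/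
/-!
Writing `E_λ(x) = exp((1/ρ) ∫₀ˣ (b − α − λ))`, every solution of the ODE `ρ Ω' = (b − λ − α) Ω`
is a constant multiple of `E_λ`, so the boundary and normalization conditions reduce the
eigenvalue problem to the scalar relation `ρ (λ/ω + 1) = g(λ) := ∫₀¹ α E_λ`.
Since `α ≥ 0`, `g` is continuous, nonnegative and nonincreasing in `λ`, while the left side is an
increasing affine function of `λ`; hence the relation has exactly one root, whose sign is that
of `g(0) − ρ`.
-/

open Real Set Filter intervalIntegral

/-- The scalar eigenvalue relation
`ρ (λ/ω + 1) = ∫₀¹ α(x) exp((1/ρ) ∫₀ˣ (b − α(s) − λ) ds) dx`. -/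
def EigenRelation (ρ ω b : ℝ) (α : ℝ → ℝ) (lam : ℝ) : Prop :=
  ρ * (lam / ω + 1) =
    ∫ x in (0 : ℝ)..1,
      α x * Real.exp ((1 / ρ) * ∫ s in (0 : ℝ)..x, (b - α s - lam))

/-- The eigenvalue problem for `(λ, Ω, A)` : the ODE `ρ Ω' = (b − λ − α) Ω` on `[0,1]`
(with derivative `Ωd`), `∫₀¹ α Ω dx = (λ + ω) A`, `Ω 0 = ω A / ρ`, `∫₀¹ Ω dx = 1`,
with `Ω > 0` on `[0,1]` and `A > 0`. -/
def IsEigenSolution (ρ ω b : ℝ) (α : ℝ → ℝ) (lam : ℝ) (Ω : ℝ → ℝ) (A : ℝ) : Prop :=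
  (∃ Ωd : ℝ → ℝ, ∀ x ∈ Set.Icc (0 : ℝ) 1,
      HasDerivWithinAt Ω (Ωd x) (Set.Icc 0 1) x ∧
      ρ * Ωd x = (b - lam - α x) * Ω x) ∧
  (∫ x in (0 : ℝ)..1, α x * Ω x) = (lam + ω) * A ∧
  Ω 0 = ω * A / ρ ∧
  (∫ x in (0 : ℝ)..1, Ω x) = 1 ∧
  (∀ x ∈ Set.Icc (0 : ℝ) 1, 0 < Ω x) ∧ 0 < A

section AffineEqAntitone

variable {g : ℝ → ℝ} {a c : ℝ}

theorem strictMono_affine_sub_of_antitone (ha : 0 < a) (hg : Antitone g) :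
    StrictMono fun x => a * x + c - g x := fun x y hxy => by
  have := hg hxy.le
  have := mul_lt_mul_of_pos_left hxy ha
  linarith

theorem existsUnique_affine_eq_of_antitone (ha : 0 < a) (hgc : Continuous g) (hg : Antitone g)
    (hg0 : ∀ x, 0 ≤ g x) : ∃! x, a * x + c = g x := by
  have hlin : Tendsto (fun x => a * x) atTop atTop := tendsto_id.const_mul_atTop ha
  have hsurj : Function.Surjective fun x => a * x + c - g x := by
    refine Continuous.surjective (by fun_prop) ?_ ?_
    · refine tendsto_atTop_mono' _ ?_ (tendsto_atTop_add_const_right _ (c - g 0) hlin)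
      filter_upwards [eventually_ge_atTop 0] with x hx
      linarith [hg hx]
    · exact tendsto_atBot_mono (fun x => sub_le_self _ (hg0 x))
        (tendsto_atBot_add_const_right _ c (tendsto_id.const_mul_atBot ha))
  obtain ⟨x, hx⟩ := hsurj 0
  refine ⟨x, sub_eq_zero.1 hx, fun y hy => ?_⟩
  refine (strictMono_affine_sub_of_antitone (c := c) ha hg).injective ?_
  simp only [hy, sub_self, hx]

theorem pos_iff_of_affine_eq_of_antitone (ha : 0 < a) (hg : Antitone g) {x : ℝ}
    (hx : a * x + c = g x) : 0 < x ↔ c < g 0 := by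
  rw [← (strictMono_affine_sub_of_antitone (c := c) ha hg).lt_iff_lt]
  simp only [hx, mul_zero, zero_add, sub_self, sub_neg]

theorem neg_iff_of_affine_eq_of_antitone (ha : 0 < a) (hg : Antitone g) {x : ℝ}
    (hx : a * x + c = g x) : x < 0 ↔ g 0 < c := by
  rw [← (strictMono_affine_sub_of_antitone (c := c) ha hg).lt_iff_lt]
  simp only [hx, mul_zero, zero_add, sub_self, sub_pos]

end AffineEqAntitone

theorem exists_continuous_eqOn_Icc {f : ℝ → ℝ} {a b : ℝ} (hab : a ≤ b)
    (hf : ContinuousOn f (Icc a b)) : ∃ g : ℝ → ℝ, Continuous g ∧ EqOn g f (Icc a b) :=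
  ⟨IccExtend hab ((Icc a b).domRestrict f),
    (continuousOn_iff_continuous_domRestrict.1 hf).Icc_extend',
    fun _ hx => IccExtend_of_mem hab _ hx⟩

theorem div_eq_div_of_hasDerivWithinAt_mul {f u k : ℝ → ℝ} {a b : ℝ}
    (hf : ∀ x ∈ Icc a b, HasDerivWithinAt f (k x * f x) (Icc a b) x)
    (hu : ∀ x ∈ Icc a b, HasDerivWithinAt u (k x * u x) (Icc a b) x)
    (hu0 : ∀ x ∈ Icc a b, u x ≠ 0) : ∀ x ∈ Icc a b, f x / u x = f a / u a := by
  refine constant_of_has_deriv_right_zero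
    (fun x hx => (hf x hx).continuousWithinAt.div (hu x hx).continuousWithinAt (hu0 x hx))
    fun x hx => ?_
  have hx' : x ∈ Icc a b := Ico_subset_Icc_self hx
  have hderiv := ((hf x hx').div (hu x hx') (hu0 x hx')).mono_of_mem_nhdsWithin
    (Icc_mem_nhdsGE_of_mem hx)
  rwa [show (k x * f x * u x - f x * (k x * u x)) / u x ^ 2 = 0 by ring] at hderiv

section Eigen

variable {ρ ω b lam : ℝ} {α : ℝ → ℝ}

noncomputable def eigenProfile (ρ b : ℝ) (α : ℝ → ℝ) (lam x : ℝ) : ℝ :=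
  exp ((1 / ρ) * ∫ s in (0 : ℝ)..x, (b - α s - lam))

noncomputable def eigenIntegral (ρ b : ℝ) (α : ℝ → ℝ) (lam : ℝ) : ℝ :=
  ∫ x in (0 : ℝ)..1, α x * eigenProfile ρ b α lam x

theorem eigenProfile_pos (x : ℝ) : 0 < eigenProfile ρ b α lam x := exp_pos _

@[simp]
theorem eigenProfile_apply_zero : eigenProfile ρ b α lam 0 = 1 := by
  simp [eigenProfile]

theorem eigenIntegral_zero :
    eigenIntegral ρ b α 0 =
      ∫ x in (0 : ℝ)..1, α x * exp ((1 / ρ) * ∫ s in (0 : ℝ)..x, (b - α s)) := by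
  simp only [eigenIntegral, eigenProfile, sub_zero]

theorem eigenRelation_iff_affine :
    EigenRelation ρ ω b α lam ↔ ρ / ω * lam + ρ = eigenIntegral ρ b α lam := by
  change ρ * (lam / ω + 1) = eigenIntegral ρ b α lam ↔ _
  rw [show ρ * (lam / ω + 1) = ρ / ω * lam + ρ by ring]

theorem hasDerivAt_eigenProfile (hα : Continuous α) (lam x : ℝ) :
    HasDerivAt (eigenProfile ρ b α lam) ((b - α x - lam) / ρ * eigenProfile ρ b α lam x) x := by
  have hc : Continuous fun s => b - α s - lam := by fun_prop
  have hprim := ((hc.integral_hasStrictDerivAt 0 x).hasDerivAt.const_mul (1 / ρ)).exp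
  exact hprim.congr_deriv (by rw [eigenProfile]; ring)

theorem continuous_eigenProfile (hα : Continuous α) (lam : ℝ) :
    Continuous (eigenProfile ρ b α lam) :=
  continuous_iff_continuousAt.2 fun x => (hasDerivAt_eigenProfile hα lam x).continuousAt

theorem eigenProfile_eq_mul_exp (hα : Continuous α) (lam x : ℝ) :
    eigenProfile ρ b α lam x = eigenProfile ρ b α 0 x * exp (-(lam * x / ρ)) := by
  have hint : ∫ s in (0 : ℝ)..x, (b - α s - lam) = (∫ s in (0 : ℝ)..x, (b - α s)) - lam * x := by
    rw [integral_sub (f := fun s => b - α s) (g := fun _ => lam)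
      ((continuous_const.sub hα).intervalIntegrable _ _) intervalIntegrable_const,
      intervalIntegral.integral_const]
    simp [mul_comm]
  simp only [eigenProfile, ← exp_add, sub_zero, hint]
  ring_nf

theorem continuous_eigenProfile_uncurry (hα : Continuous α) :
    Continuous fun p : ℝ × ℝ => eigenProfile ρ b α p.1 p.2 := by
  rw [show (fun p : ℝ × ℝ => eigenProfile ρ b α p.1 p.2) = fun p =>
      eigenProfile ρ b α 0 p.2 * exp (-(p.1 * p.2 / ρ)) from
    funext fun p => eigenProfile_eq_mul_exp hα p.1 p.2]
  have := continuous_eigenProfile (ρ := ρ) (b := b) hα 0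
  fun_prop

theorem antitone_eigenProfile (hρ : 0 < ρ) (hα : Continuous α) {x : ℝ} (hx : 0 ≤ x) :
    Antitone fun lam => eigenProfile ρ b α lam x := fun l₁ l₂ hl => by
  dsimp only
  rw [eigenProfile_eq_mul_exp hα l₁, eigenProfile_eq_mul_exp hα l₂]
  gcongr
  exact (eigenProfile_pos x).le

theorem eigenProfile_congr {β : ℝ → ℝ} (h : EqOn α β (Icc 0 1)) {x : ℝ} (hx : x ∈ Icc (0 : ℝ) 1) :
    eigenProfile ρ b α lam x = eigenProfile ρ b β lam x := by
  rw [eigenProfile, eigenProfile, integral_congr fun s hs => ?_]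
  rw [uIcc_of_le hx.1] at hs
  simp only [h (Icc_subset_Icc_right hx.2 hs)]

theorem eigenIntegral_congr {β : ℝ → ℝ} (h : EqOn α β (Icc 0 1)) :
    eigenIntegral ρ b α lam = eigenIntegral ρ b β lam :=
  integral_congr fun x hx => by
    rw [uIcc_of_le zero_le_one] at hx
    rw [h hx, eigenProfile_congr h hx]

theorem eigenRelation_congr {β : ℝ → ℝ} (h : EqOn α β (Icc 0 1)) :
    EigenRelation ρ ω b α lam ↔ EigenRelation ρ ω b β lam := by
  rw [eigenRelation_iff_affine, eigenRelation_iff_affine, eigenIntegral_congr h]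

theorem isEigenSolution_congr {β : ℝ → ℝ} (h : EqOn α β (Icc 0 1)) {Ω : ℝ → ℝ} {A : ℝ} :
    IsEigenSolution ρ ω b α lam Ω A ↔ IsEigenSolution ρ ω b β lam Ω A := by
  have hint : ∫ x in (0 : ℝ)..1, α x * Ω x = ∫ x in (0 : ℝ)..1, β x * Ω x :=
    integral_congr fun x hx => by
      rw [uIcc_of_le zero_le_one] at hx
      rw [h hx]
  have hode : ∀ Ωd : ℝ → ℝ,
      (∀ x ∈ Icc (0 : ℝ) 1, HasDerivWithinAt Ω (Ωd x) (Icc 0 1) x ∧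
        ρ * Ωd x = (b - lam - α x) * Ω x) ↔
      (∀ x ∈ Icc (0 : ℝ) 1, HasDerivWithinAt Ω (Ωd x) (Icc 0 1) x ∧
        ρ * Ωd x = (b - lam - β x) * Ω x) :=
    fun Ωd => forall₂_congr fun x hx => by rw [h hx]
  simp only [IsEigenSolution, hint, hode]

theorem continuous_eigenIntegral (hα : Continuous α) : Continuous (eigenIntegral ρ b α) :=
  continuous_parametric_intervalIntegral_of_continuous'
    (f := fun lam x => α x * eigenProfile ρ b α lam x)
    ((hα.comp continuous_snd).mul (continuous_eigenProfile_uncurry hα)) 0 1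

theorem eigenIntegral_nonneg (hα0 : ∀ x ∈ Icc (0 : ℝ) 1, 0 ≤ α x) (lam : ℝ) :
    0 ≤ eigenIntegral ρ b α lam :=
  integral_nonneg zero_le_one fun x hx => mul_nonneg (hα0 x hx) (eigenProfile_pos x).le

theorem antitone_eigenIntegral (hρ : 0 < ρ) (hα : Continuous α)
    (hα0 : ∀ x ∈ Icc (0 : ℝ) 1, 0 ≤ α x) : Antitone (eigenIntegral ρ b α) := fun l₁ l₂ hl =>
  integral_mono_on zero_le_one ((hα.mul (continuous_eigenProfile hα l₂)).intervalIntegrable _ _)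
    ((hα.mul (continuous_eigenProfile hα l₁)).intervalIntegrable _ _) fun x hx =>
      mul_le_mul_of_nonneg_left (antitone_eigenProfile hρ hα hx.1 hl) (hα0 x hx)

theorem integral_eigenProfile_pos (hα : Continuous α) :
    0 < ∫ x in (0 : ℝ)..1, eigenProfile ρ b α lam x :=
  intervalIntegral_pos_of_pos ((continuous_eigenProfile hα lam).intervalIntegrable _ _)
    eigenProfile_pos one_pos

theorem existsUnique_eigenRelation (hρ : 0 < ρ) (hω : 0 < ω) (hα : Continuous α)
    (hα0 : ∀ x ∈ Icc (0 : ℝ) 1, 0 ≤ α x) : ∃! lam, EigenRelation ρ ω b α lam := by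
  simp only [eigenRelation_iff_affine]
  exact existsUnique_affine_eq_of_antitone (div_pos hρ hω) (continuous_eigenIntegral hα)
    (antitone_eigenIntegral hρ hα hα0) (eigenIntegral_nonneg hα0)

theorem EigenRelation.pos_iff (hρ : 0 < ρ) (hω : 0 < ω) (hα : Continuous α)
    (hα0 : ∀ x ∈ Icc (0 : ℝ) 1, 0 ≤ α x) (h : EigenRelation ρ ω b α lam) :
    0 < lam ↔ ρ < eigenIntegral ρ b α 0 :=
  pos_iff_of_affine_eq_of_antitone (div_pos hρ hω) (antitone_eigenIntegral hρ hα hα0)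
    (eigenRelation_iff_affine.1 h)

theorem EigenRelation.neg_iff (hρ : 0 < ρ) (hω : 0 < ω) (hα : Continuous α)
    (hα0 : ∀ x ∈ Icc (0 : ℝ) 1, 0 ≤ α x) (h : EigenRelation ρ ω b α lam) :
    lam < 0 ↔ eigenIntegral ρ b α 0 < ρ :=
  neg_iff_of_affine_eq_of_antitone (div_pos hρ hω) (antitone_eigenIntegral hρ hα hα0)
    (eigenRelation_iff_affine.1 h)

theorem isEigenSolution_of_eigenRelation (hρ : 0 < ρ) (hω : 0 < ω) (hα : Continuous α)
    (h : EigenRelation ρ ω b α lam) :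
    IsEigenSolution ρ ω b α lam
      (fun x => eigenProfile ρ b α lam x / ∫ y in (0 : ℝ)..1, eigenProfile ρ b α lam y)
      (ρ / (ω * ∫ y in (0 : ℝ)..1, eigenProfile ρ b α lam y)) := by
  set I := ∫ y in (0 : ℝ)..1, eigenProfile ρ b α lam y
  have hI : 0 < I := integral_eigenProfile_pos hα
  change ρ * (lam / ω + 1) = eigenIntegral ρ b α lam at h
  refine ⟨⟨fun x => (b - α x - lam) / ρ * (eigenProfile ρ b α lam x / I), fun x _ => ⟨?_, ?_⟩⟩,
    ?_, ?_, ?_, fun x _ => div_pos (eigenProfile_pos x) hI, by positivity⟩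
  · exact ((hasDerivAt_eigenProfile hα lam x).div_const I).hasDerivWithinAt.congr_deriv (by ring)
  · field_simp
    ring
  · simp only [mul_div_assoc', intervalIntegral.integral_div]
    rw [← eigenIntegral, ← h]
    field_simp
  · simp only [eigenProfile_apply_zero]
    field_simp
  · rw [intervalIntegral.integral_div, div_self hI.ne']

theorem IsEigenSolution.eqOn_mul_eigenProfile (hρ : ρ ≠ 0) (hα : Continuous α) {Ω : ℝ → ℝ}
    {A : ℝ} (h : IsEigenSolution ρ ω b α lam Ω A) :
    ∀ x ∈ Icc (0 : ℝ) 1, Ω x = Ω 0 * eigenProfile ρ b α lam x := by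
  obtain ⟨⟨Ωd, hΩd⟩, -⟩ := h
  have hratio := div_eq_div_of_hasDerivWithinAt_mul (k := fun x => (b - α x - lam) / ρ)
    (fun x hx => (hΩd x hx).1.congr_deriv (by field_simp; linarith [(hΩd x hx).2]))
    (fun x _ => (hasDerivAt_eigenProfile hα lam x).hasDerivWithinAt)
    (fun x _ => (eigenProfile_pos x).ne')
  intro x hx
  rw [← div_eq_iff (eigenProfile_pos x).ne', hratio x hx, eigenProfile_apply_zero, div_one]

theorem IsEigenSolution.eigenRelation (hρ : 0 < ρ) (hω : 0 < ω) (hα : Continuous α)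
    {Ω : ℝ → ℝ} {A : ℝ} (h : IsEigenSolution ρ ω b α lam Ω A) : EigenRelation ρ ω b α lam := by
  have hΩ := h.eqOn_mul_eigenProfile hρ.ne' hα
  obtain ⟨-, hint, h0, -, hpos, -⟩ := h
  have hαΩ : ∫ x in (0 : ℝ)..1, α x * Ω x = Ω 0 * eigenIntegral ρ b α lam := by
    rw [eigenIntegral, ← integral_const_mul]
    refine integral_congr fun x hx => ?_
    rw [uIcc_of_le zero_le_one] at hx
    simp only [hΩ x hx]
    ring
  change ρ * (lam / ω + 1) = eigenIntegral ρ b α lam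
  refine mul_left_cancel₀ (hpos 0 ⟨le_rfl, zero_le_one⟩).ne' ?_
  rw [← hαΩ, hint, h0]
  field_simp

theorem IsEigenSolution.apply_zero_mul_integral (hρ : ρ ≠ 0) (hα : Continuous α) {Ω : ℝ → ℝ}
    {A : ℝ} (h : IsEigenSolution ρ ω b α lam Ω A) :
    Ω 0 * ∫ x in (0 : ℝ)..1, eigenProfile ρ b α lam x = 1 := by
  rw [← integral_const_mul]
  refine (integral_congr fun x hx => ?_).trans h.2.2.2.1
  rw [uIcc_of_le zero_le_one] at hx
  exact (h.eqOn_mul_eigenProfile hρ hα x hx).symm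

theorem IsEigenSolution.unique (hρ : 0 < ρ) (hω : 0 < ω) (hα : Continuous α)
    (hα0 : ∀ x ∈ Icc (0 : ℝ) 1, 0 ≤ α x) {lam₁ lam₂ : ℝ} {Ω₁ Ω₂ : ℝ → ℝ} {A₁ A₂ : ℝ}
    (h₁ : IsEigenSolution ρ ω b α lam₁ Ω₁ A₁) (h₂ : IsEigenSolution ρ ω b α lam₂ Ω₂ A₂) :
    lam₁ = lam₂ ∧ A₁ = A₂ ∧ EqOn Ω₁ Ω₂ (Icc 0 1) := by
  obtain rfl : lam₁ = lam₂ := (existsUnique_eigenRelation hρ hω hα hα0).unique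
    (h₁.eigenRelation hρ hω hα) (h₂.eigenRelation hρ hω hα)
  have hΩ0 : Ω₁ 0 = Ω₂ 0 := mul_right_cancel₀ (integral_eigenProfile_pos hα).ne'
    ((h₁.apply_zero_mul_integral hρ.ne' hα).trans (h₂.apply_zero_mul_integral hρ.ne' hα).symm)
  have hA : ω * A₁ / ρ = ω * A₂ / ρ := h₁.2.2.1.symm.trans (hΩ0.trans h₂.2.2.1)
  refine ⟨rfl, mul_left_cancel₀ hω.ne' ((div_left_inj' hρ.ne').1 hA), fun x hx => ?_⟩
  rw [h₁.eqOn_mul_eigenProfile hρ.ne' hα x hx, h₂.eqOn_mul_eigenProfile hρ.ne' hα x hx, hΩ0]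

end Eigen

/-- Let `ρ > 0`, `ω > 0`, `b ∈ ℝ`, `α : [0,1] → (0,∞)` continuous.  There
is a unique real `λ` solving the eigenvalue relation; equivalently the eigenvalue
problem has a solution `(λ, Ω, A)` with `Ω > 0`, `A > 0`, unique in the sense that `λ`
and `A` are determined and `Ω` is determined on `[0,1]`.  Moreover `λ > 0` iff
`∫₀¹ α(x) exp((1/ρ) ∫₀ˣ (b − α(s)) ds) dx > ρ` and `λ < 0` iff `< ρ`. -/
theorem stmt5 (ρ ω b : ℝ) (hρ : 0 < ρ) (hω : 0 < ω) (α : ℝ → ℝ)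
    (hαc : ContinuousOn α (Set.Icc 0 1))
    (hαpos : ∀ x ∈ Set.Icc (0 : ℝ) 1, 0 < α x) :
    (∃! lam : ℝ, EigenRelation ρ ω b α lam) ∧
    (∃ lam : ℝ, ∃ Ω : ℝ → ℝ, ∃ A : ℝ, IsEigenSolution ρ ω b α lam Ω A) ∧
    (∀ lam₁ lam₂ : ℝ, ∀ Ω₁ Ω₂ : ℝ → ℝ, ∀ A₁ A₂ : ℝ,
      IsEigenSolution ρ ω b α lam₁ Ω₁ A₁ → IsEigenSolution ρ ω b α lam₂ Ω₂ A₂ →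
      lam₁ = lam₂ ∧ A₁ = A₂ ∧ Set.EqOn Ω₁ Ω₂ (Set.Icc 0 1)) ∧
    (∀ lam : ℝ, EigenRelation ρ ω b α lam →
      ((0 < lam ↔
        (∫ x in (0 : ℝ)..1,
          α x * Real.exp ((1 / ρ) * ∫ s in (0 : ℝ)..x, (b - α s))) > ρ) ∧
       (lam < 0 ↔
        (∫ x in (0 : ℝ)..1,
          α x * Real.exp ((1 / ρ) * ∫ s in (0 : ℝ)..x, (b - α s))) < ρ))) := by
  -- Both sides only see `α` on `[0, 1]`, so `α` may be replaced by a continuous extension.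
  obtain ⟨β, hβ, hβα⟩ := exists_continuous_eqOn_Icc zero_le_one hαc
  have hαβ : EqOn α β (Icc 0 1) := hβα.symm
  have hβ0 : ∀ x ∈ Icc (0 : ℝ) 1, 0 ≤ β x := fun x hx => hβα hx ▸ (hαpos x hx).le
  simp only [eigenRelation_congr hαβ, isEigenSolution_congr hαβ, ← eigenIntegral_zero,
    eigenIntegral_congr hαβ]
  obtain ⟨lam, hlam, -⟩ := existsUnique_eigenRelation hρ hω hβ hβ0
  exact ⟨existsUnique_eigenRelation hρ hω hβ hβ0,
    ⟨lam, _, _, isEigenSolution_of_eigenRelation hρ hω hβ hlam⟩,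
    fun _ _ _ _ _ _ h₁ h₂ => h₁.unique hρ hω hβ hβ0 h₂,
    fun _ h => ⟨h.pos_iff hρ hω hβ hβ0, h.neg_iff hρ hω hβ hβ0⟩⟩
end

section
/- Let ρ_d > 0, b ∈ ℝ, and let α : [0,1] → (0, ∞) be continuous. Then the function L(λ) = ∫₀¹ α(x)·exp( (1/ρ_d)·∫₀ˣ (b − α(s) − λ) ds ) dx is continuous and strictly decreasing on ℝ, with L(λ) → 0 as λ → +∞ and L(λ) → +∞ as λ → −∞. -/
/-!
Splitting `∫₀ˣ (b − α − λ) = ∫₀ˣ (b − α) − λx` writes `L(λ) = F(λ/ρ)`, where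
`F(t) = ∫₀¹ c(x) e^{−tx} dx` is a finite Laplace transform of the weight
`c(x) = α(x) exp((1/ρ) ∫₀ˣ (b − α))`, which is positive and independent of `λ`. Then `F` is
strictly decreasing because each `e^{−tx}` with `x > 0` is, `F(t) → 0` as `t → +∞` by dominated
convergence with bound `|c|`, and `e^{−tx} ≥ −tx` gives `F(t) ≥ −t ∫₀¹ x c(x) dx → +∞` as
`t → −∞`.
-/

open Real Set Filter

/-- The function `L(λ) = ∫₀¹ α(x) exp((1/ρ) ∫₀ˣ (b − α(s) − λ) ds) dx`. -/
noncomputable def Lfun (ρ b : ℝ) (α : ℝ → ℝ) (lam : ℝ) : ℝ :=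
  ∫ x in (0 : ℝ)..1,
    α x * Real.exp ((1 / ρ) * ∫ s in (0 : ℝ)..x, (b - α s - lam))

open MeasureTheory intervalIntegral Topology

noncomputable def finiteLaplace (c : ℝ → ℝ) (a t : ℝ) : ℝ :=
  ∫ x in (0 : ℝ)..a, c x * exp (-(t * x))

section FiniteLaplace

variable {c : ℝ → ℝ} {a : ℝ}

theorem finiteLaplace_congr {d : ℝ → ℝ} (h : EqOn c d (uIcc 0 a)) :
    finiteLaplace c a = finiteLaplace d a :=
  funext fun _ => integral_congr fun x hx => by simp only [h hx]

theorem IntervalIntegrable.mul_exp_neg_mul (hc : IntervalIntegrable c volume 0 a) (t : ℝ) :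
    IntervalIntegrable (fun x => c x * exp (-(t * x))) volume 0 a :=
  hc.mul_continuousOn (by fun_prop)

theorem continuous_finiteLaplace (ha : 0 ≤ a) (hc : ContinuousOn c (Icc 0 a)) :
    Continuous (finiteLaplace c a) := by
  set d := IccExtend ha ((Icc 0 a).domRestrict c)
  have hd : Continuous d := hc.domRestrict.Icc_extend'
  have hcd : EqOn c d (uIcc 0 a) := fun x hx => by
    rw [uIcc_of_le ha] at hx
    simp [d, IccExtend_of_mem _ _ hx]
  rw [finiteLaplace_congr hcd]
  exact continuous_parametric_intervalIntegral_of_continuous' (by fun_prop) 0 a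

theorem strictAnti_finiteLaplace (ha : 0 < a) (hc : IntervalIntegrable c volume 0 a)
    (hpos : ∀ x ∈ Ioo 0 a, 0 < c x) : StrictAnti (finiteLaplace c a) := by
  intro t₁ t₂ ht
  rw [← sub_pos, finiteLaplace, finiteLaplace,
    ← integral_sub (hc.mul_exp_neg_mul t₁) (hc.mul_exp_neg_mul t₂)]
  refine intervalIntegral_pos_of_pos_on
    ((hc.mul_exp_neg_mul t₁).sub (hc.mul_exp_neg_mul t₂)) (fun x hx => ?_) ha
  have hexp : exp (-(t₂ * x)) < exp (-(t₁ * x)) := by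
    gcongr
    exact hx.1
  rw [← mul_sub]
  exact mul_pos (hpos x hx) (sub_pos.2 hexp)

theorem tendsto_finiteLaplace_atTop (ha : 0 ≤ a) (hc : IntervalIntegrable c volume 0 a) :
    Tendsto (finiteLaplace c a) atTop (𝓝 0) := by
  have hlim := tendsto_integral_filter_of_dominated_convergence (μ := volume) (l := atTop)
    (F := fun t x => c x * exp (-(t * x))) (f := fun _ => 0) (fun x => ‖c x‖)
    (Eventually.of_forall fun t => (hc.mul_exp_neg_mul t).def'.aestronglyMeasurable) ?_ hc.norm ?_
  · rwa [intervalIntegral.integral_zero] at hlim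
  · filter_upwards [eventually_ge_atTop 0] with t ht
    refine Eventually.of_forall fun x hx => ?_
    rw [uIoc_of_le ha] at hx
    have hexp : exp (-(t * x)) ≤ 1 := exp_le_one_iff.2 (neg_nonpos.2 (mul_nonneg ht hx.1.le))
    rw [norm_mul, norm_of_nonneg (exp_pos _).le]
    exact mul_le_of_le_one_right (norm_nonneg _) hexp
  · refine Eventually.of_forall fun x hx => ?_
    rw [uIoc_of_le ha] at hx
    have hexp : Tendsto (fun t => exp (-(t * x))) atTop (𝓝 0) :=
      tendsto_exp_atBot.comp (tendsto_neg_atTop_atBot.comp (tendsto_id.atTop_mul_const hx.1))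
    simpa using hexp.const_mul (c x)

theorem tendsto_finiteLaplace_atBot (ha : 0 < a) (hc : IntervalIntegrable c volume 0 a)
    (hpos : ∀ x ∈ Ioo 0 a, 0 < c x) : Tendsto (finiteLaplace c a) atBot atTop := by
  set K := ∫ x in (0 : ℝ)..a, x * c x
  have hxc : IntervalIntegrable (fun x => x * c x) volume 0 a :=
    hc.continuousOn_mul continuousOn_id
  have hK : 0 < K :=
    intervalIntegral_pos_of_pos_on hxc (fun x hx => mul_pos hx.1 (hpos x hx)) ha
  have hlow : ∀ t, -t * K ≤ finiteLaplace c a t := fun t => by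
    rw [finiteLaplace, ← intervalIntegral.integral_const_mul]
    refine integral_mono_on_of_le_Ioo ha.le (hxc.const_mul _) (hc.mul_exp_neg_mul t)
      fun x hx => ?_
    have : -(t * x) ≤ exp (-(t * x)) := by linarith [add_one_le_exp (-(t * x))]
    nlinarith [mul_le_mul_of_nonneg_left this (hpos x hx).le]
  refine tendsto_atTop_mono hlow (Tendsto.atTop_mul_const hK ?_)
  exact tendsto_neg_atBot_atTop

end FiniteLaplace

noncomputable def Lweight (ρ b : ℝ) (α : ℝ → ℝ) (x : ℝ) : ℝ :=
  α x * exp ((1 / ρ) * ∫ s in (0 : ℝ)..x, (b - α s))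

theorem Lweight_pos (ρ b : ℝ) {α : ℝ → ℝ} {x : ℝ} (hx : 0 < α x) : 0 < Lweight ρ b α x :=
  mul_pos hx (exp_pos _)

theorem continuousOn_Lweight (ρ b : ℝ) {α : ℝ → ℝ} (hα : ContinuousOn α (Icc 0 1)) :
    ContinuousOn (Lweight ρ b α) (Icc 0 1) := by
  have hint : IntervalIntegrable (fun s => b - α s) volume 0 1 :=
    (continuousOn_const.sub hα).intervalIntegrable_of_Icc zero_le_one
  have hprim := continuousOn_primitive_interval' hint left_mem_uIcc
  rw [uIcc_of_le zero_le_one] at hprim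
  exact hα.mul (continuous_exp.comp_continuousOn (continuousOn_const.mul hprim))

theorem Lfun_eq_finiteLaplace (ρ b : ℝ) {α : ℝ → ℝ} (hα : IntervalIntegrable α volume 0 1) :
    Lfun ρ b α = finiteLaplace (Lweight ρ b α) 1 ∘ (· / ρ) := by
  funext lam
  refine integral_congr fun x hx => ?_
  have hαx : IntervalIntegrable α volume 0 x := hα.mono_set (uIcc_subset_uIcc_left hx)
  have hsplit :
      ∫ s in (0 : ℝ)..x, (b - α s - lam) = (∫ s in (0 : ℝ)..x, (b - α s)) - lam * x := by
    rw [integral_sub (intervalIntegrable_const.sub hαx) intervalIntegrable_const,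
      intervalIntegral.integral_const, smul_eq_mul, sub_zero, mul_comm]
  simp only [Lweight, hsplit, mul_assoc, ← exp_add]
  ring_nf

/-- Let `ρ > 0`, `b ∈ ℝ`, `α : [0,1] → (0,∞)` continuous.  Then `L` is
continuous and strictly decreasing on `ℝ`, with `L(λ) → 0` as `λ → +∞` and
`L(λ) → +∞` as `λ → −∞`. -/
theorem stmt6 (ρ b : ℝ) (hρ : 0 < ρ) (α : ℝ → ℝ)
    (hαc : ContinuousOn α (Set.Icc 0 1))
    (hαpos : ∀ x ∈ Set.Icc (0 : ℝ) 1, 0 < α x) :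
    Continuous (Lfun ρ b α) ∧
    StrictAnti (Lfun ρ b α) ∧
    Filter.Tendsto (Lfun ρ b α) Filter.atTop (nhds 0) ∧
    Filter.Tendsto (Lfun ρ b α) Filter.atBot Filter.atTop := by
  have hc := continuousOn_Lweight ρ b hαc
  have hint := hc.intervalIntegrable_of_Icc (μ := volume) zero_le_one
  have hpos : ∀ x ∈ Ioo (0 : ℝ) 1, 0 < Lweight ρ b α x :=
    fun x hx => Lweight_pos ρ b (hαpos x (Ioo_subset_Icc_self hx))
  have hdiv : StrictMono (· / ρ) := fun _ _ h => div_lt_div_of_pos_right h hρ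
  rw [Lfun_eq_finiteLaplace ρ b (hαc.intervalIntegrable_of_Icc (μ := volume) zero_le_one)]
  exact ⟨(continuous_finiteLaplace zero_le_one hc).comp (continuous_id.div_const ρ),
    (strictAnti_finiteLaplace one_pos hint hpos).comp_strictMono hdiv,
    (tendsto_finiteLaplace_atTop zero_le_one hint).comp (tendsto_id.atTop_div_const hρ),
    (tendsto_finiteLaplace_atBot one_pos hint hpos).comp (tendsto_id.atBot_div_const hρ)⟩
end

section
/- Let ρ_d > 0, b > 0, and let α > 0 be a constant. Define b* by b* = b if b = ρ_d, and otherwise b* is the unique positive number with b* ≠ b and b*·exp(−b*/ρ_d) = b·exp(−b/ρ_d). Then ∫₀¹ α·exp((b − α)x/ρ_d) dx > ρ_d if and only if α > b*, and ∫₀¹ α·exp((b − α)x/ρ_d) dx = ρ_d if and only if α = b*. In particular, the unique real eigenvalue λ of the problem ρ_d (λ/ω + 1) = ∫₀¹ α·exp((b − α − λ)x/ρ_d) dx is positive iff α > b*, zero iff α = b*, and negative iff α < b*. -/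
/-!
With `F x = x e^{-x/ρ}`, integrating the exponential gives
`(b - a) (∫₀¹ a e^{(b-a)x/ρ} dx - ρ) = ρ e^{b/ρ} (F a - F b)`.
`F` increases up to `ρ` and decreases after it, so `b*` and `b` are the two ends of the superlevel
set `{F ≥ F b}` and `F a - F b` has the sign of `(a - b) (b* - a)`; together this gives
`sign (∫₀¹ a e^{(b-a)x/ρ} dx - ρ) = sign (a - b*)`.
In the eigenvalue equation the left side increases and the right side decreases in `λ`, so the
sign of `λ` is the sign of the right side minus the left side at `λ = 0`, i.e. of the integral
above minus `ρ`.
-/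

open Real Set

section Unimodal

variable {f : ℝ → ℝ} {m b c : ℝ}

theorem mem_Ioo_of_apply_eq_of_strictMonoOn_of_strictAntiOn (hmono : StrictMonoOn f (Iic m))
    (hanti : StrictAntiOn f (Ici m)) (hbc : f b = f c) (h : b < c) : m ∈ Ioo b c := by
  constructor
  · by_contra! hbm
    exact (hanti (mem_Ici.2 hbm) (mem_Ici.2 (hbm.trans h.le)) h).ne' hbc
  · by_contra! hcm
    exact (hmono (mem_Iic.2 (h.le.trans hcm)) (mem_Iic.2 hcm) h).ne hbc

theorem sign_apply_sub_of_strictMonoOn_of_strictAntiOn (hmono : StrictMonoOn f (Iic m))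
    (hanti : StrictAntiOn f (Ici m)) (hbm : b ≤ m) (hmc : m ≤ c) (hbc : f b = f c) (a : ℝ) :
    SignType.sign (f a - f b) = SignType.sign ((a - b) * (c - a)) := by
  rcases lt_trichotomy a b with hab | rfl | hba
  · have hfa : f a < f b := hmono (mem_Iic.2 (hab.le.trans hbm)) (mem_Iic.2 hbm) hab
    rw [_root_.sign_neg (sub_neg.2 hfa),
      _root_.sign_neg (mul_neg_of_neg_of_pos (sub_neg.2 hab) (by linarith))]
  · simp
  rcases lt_trichotomy a c with hac | rfl | hca
  · have hfa : f b < f a := by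
      rcases le_total a m with ham | hma
      · exact hmono (mem_Iic.2 hbm) (mem_Iic.2 ham) hba
      · exact hbc ▸ hanti (mem_Ici.2 hma) (mem_Ici.2 hmc) hac
    rw [sign_pos (sub_pos.2 hfa), sign_pos (mul_pos (sub_pos.2 hba) (sub_pos.2 hac))]
  · simp [hbc]
  · have hfa : f a < f b := hbc ▸ hanti (mem_Ici.2 hmc) (mem_Ici.2 (hmc.trans hca.le)) hca
    rw [_root_.sign_neg (sub_neg.2 hfa),
      _root_.sign_neg (mul_neg_of_pos_of_neg (sub_pos.2 hba) (sub_neg.2 hca))]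

theorem sign_sub_and_sign_apply_sub_of_apply_eq (hmono : StrictMonoOn f (Iic m))
    (hanti : StrictAntiOn f (Ici m)) (hcb : f c = f b) (hpeak : c = b → b = m) :
    SignType.sign (b - m) = SignType.sign (b - c) ∧
      ∀ a, SignType.sign (f a - f b) = SignType.sign ((a - b) * (c - a)) := by
  rcases lt_trichotomy b c with hlt | rfl | hgt
  · obtain ⟨hbm, hmc⟩ :=
      mem_Ioo_of_apply_eq_of_strictMonoOn_of_strictAntiOn hmono hanti hcb.symm hlt
    refine ⟨?_,
      sign_apply_sub_of_strictMonoOn_of_strictAntiOn hmono hanti hbm.le hmc.le hcb.symm⟩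
    rw [_root_.sign_neg (sub_neg.2 hbm), _root_.sign_neg (sub_neg.2 hlt)]
  · obtain rfl := hpeak rfl
    exact ⟨rfl, sign_apply_sub_of_strictMonoOn_of_strictAntiOn hmono hanti le_rfl le_rfl rfl⟩
  · obtain ⟨hcm, hmb⟩ :=
      mem_Ioo_of_apply_eq_of_strictMonoOn_of_strictAntiOn hmono hanti hcb hgt
    refine ⟨by rw [sign_pos (sub_pos.2 hmb), sign_pos (sub_pos.2 hgt)], fun a => ?_⟩
    rw [← hcb, sign_apply_sub_of_strictMonoOn_of_strictAntiOn hmono hanti hcm.le hmb.le hcb a]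
    ring_nf

end Unimodal

theorem sign_sub_eq_sign_sub_of_apply_eq {f g : ℝ → ℝ} (hf : StrictMono f) (hg : StrictAnti g)
    {x : ℝ} (hx : f x = g x) (y : ℝ) :
    SignType.sign (x - y) = SignType.sign (g y - f y) := by
  rcases lt_trichotomy x y with hxy | rfl | hyx
  · rw [_root_.sign_neg (sub_neg.2 hxy), _root_.sign_neg (sub_neg.2 ((hg hxy).trans_le
      (hx ▸ (hf hxy).le)))]
  · simp [hx]
  · rw [sign_pos (sub_pos.2 hyx), sign_pos (sub_pos.2 ((hf hyx).trans_le (hx ▸ (hg hyx).le)))]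

noncomputable def xExpNeg (ρ x : ℝ) : ℝ := x * exp (-x / ρ)

theorem hasDerivAt_xExpNeg (ρ x : ℝ) :
    HasDerivAt (xExpNeg ρ) (exp (-x / ρ) * (1 - x / ρ)) x := by
  have h := (hasDerivAt_id' x).mul ((hasDerivAt_neg x).div_const ρ).exp
  exact h.congr_deriv (by ring)

theorem continuous_xExpNeg (ρ : ℝ) : Continuous (xExpNeg ρ) :=
  continuous_iff_continuousAt.2 fun x => (hasDerivAt_xExpNeg ρ x).continuousAt

theorem strictMonoOn_xExpNeg {ρ : ℝ} (hρ : 0 < ρ) : StrictMonoOn (xExpNeg ρ) (Iic ρ) := by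
  refine strictMonoOn_of_deriv_pos (convex_Iic ρ) (continuous_xExpNeg ρ).continuousOn
    fun x hx => ?_
  rw [interior_Iic] at hx
  rw [(hasDerivAt_xExpNeg ρ x).deriv]
  exact mul_pos (exp_pos _) (sub_pos.2 ((div_lt_one hρ).2 hx))

theorem strictAntiOn_xExpNeg {ρ : ℝ} (hρ : 0 < ρ) : StrictAntiOn (xExpNeg ρ) (Ici ρ) := by
  refine strictAntiOn_of_deriv_neg (convex_Ici ρ) (continuous_xExpNeg ρ).continuousOn
    fun x hx => ?_
  rw [interior_Ici] at hx
  rw [(hasDerivAt_xExpNeg ρ x).deriv]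
  exact mul_neg_of_pos_of_neg (exp_pos _) (sub_neg.2 ((one_lt_div hρ).2 hx))

theorem integral_exp_mul_div {ρ k : ℝ} (hρ : ρ ≠ 0) (hk : k ≠ 0) :
    ∫ x in (0 : ℝ)..1, exp (k * x / ρ) = ρ / k * (exp (k / ρ) - 1) := by
  simp_rw [mul_div_right_comm k]
  rw [intervalIntegral.integral_comp_mul_left (fun u => exp u) (div_ne_zero hk hρ),
    integral_exp, smul_eq_mul, inv_div, mul_one, mul_zero, exp_zero]

theorem sub_mul_integral_mul_exp_sub {ρ : ℝ} (hρ : ρ ≠ 0) (a b : ℝ) :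
    (b - a) * ((∫ x in (0 : ℝ)..1, a * exp ((b - a) * x / ρ)) - ρ) =
      ρ * exp (b / ρ) * (xExpNeg ρ a - xExpNeg ρ b) := by
  rcases eq_or_ne a b with rfl | hab
  · simp
  rw [intervalIntegral.integral_const_mul, integral_exp_mul_div hρ (sub_ne_zero.2 hab.symm)]
  have hexp : exp ((b - a) / ρ) = exp (b / ρ) * exp (-a / ρ) := by
    rw [← exp_add]; ring_nf
  have hexp_b : exp (b / ρ) * exp (-(b / ρ)) = 1 := by
    rw [← exp_add, add_neg_cancel, exp_zero]
  rw [hexp, xExpNeg, xExpNeg]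
  field_simp
  linear_combination b * hexp_b

theorem sign_integral_mul_exp_sub {ρ b c : ℝ} (hρ : 0 < ρ) (hcb : xExpNeg ρ c = xExpNeg ρ b)
    (hbρ : c = b → b = ρ) (a : ℝ) :
    SignType.sign ((∫ x in (0 : ℝ)..1, a * exp ((b - a) * x / ρ)) - ρ) =
      SignType.sign (a - c) := by
  obtain ⟨hside, hlevel⟩ := sign_sub_and_sign_apply_sub_of_apply_eq (strictMonoOn_xExpNeg hρ)
    (strictAntiOn_xExpNeg hρ) hcb hbρ
  rcases eq_or_ne a b with rfl | hab
  · simpa using hside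
  refine mul_left_cancel₀ (sign_ne_zero.2 (sub_ne_zero.2 hab.symm)) ?_
  rw [← sign_mul, sub_mul_integral_mul_exp_sub hρ.ne', sign_mul, sign_pos (by positivity),
    one_mul, hlevel, ← sign_mul]
  ring_nf

theorem strictAnti_integral_mul_exp_sub {α ρ : ℝ} (hα : 0 < α) (hρ : 0 < ρ) (k : ℝ) :
    StrictAnti fun l => ∫ x in (0 : ℝ)..1, α * exp ((k - l) * x / ρ) := by
  intro l₁ l₂ hl
  have hcont : ∀ l : ℝ, ContinuousOn (fun x : ℝ => α * exp ((k - l) * x / ρ)) (Icc 0 1) :=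
    fun l => by fun_prop
  refine intervalIntegral.integral_lt_integral_of_continuousOn_of_le_of_exists_lt one_pos
    (hcont l₂) (hcont l₁) (fun x hx => ?_) ⟨1, right_mem_Icc.2 zero_le_one, ?_⟩
  · gcongr
    exact hx.1.le
  · gcongr

theorem stmt7_general (ρ b α ω : ℝ) (hρ : 0 < ρ) (hα : 0 < α) (hω : 0 < ω)
    (bstar : ℝ)
    (hbstar₁ : b = ρ → bstar = b)
    (hbstar₂ : b ≠ ρ → 0 < bstar ∧ bstar ≠ b ∧
      bstar * Real.exp (-bstar / ρ) = b * Real.exp (-b / ρ)) :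
    ((∫ x in (0 : ℝ)..1, α * Real.exp ((b - α) * x / ρ)) > ρ ↔ α > bstar) ∧
    ((∫ x in (0 : ℝ)..1, α * Real.exp ((b - α) * x / ρ)) = ρ ↔ α = bstar) ∧
    (∀ lam : ℝ,
      ρ * (lam / ω + 1) =
        (∫ x in (0 : ℝ)..1, α * Real.exp ((b - α - lam) * x / ρ)) →
      ((0 < lam ↔ bstar < α) ∧ (lam = 0 ↔ α = bstar) ∧ (lam < 0 ↔ α < bstar))) := by
  have hconj : xExpNeg ρ bstar = xExpNeg ρ b ∧ (bstar = b → b = ρ) := by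
    by_cases hbρ : b = ρ
    · simp [hbstar₁ hbρ, hbρ]
    · obtain ⟨-, hne, heq⟩ := hbstar₂ hbρ
      exact ⟨heq, fun h => absurd h hne⟩
  have hsign := sign_integral_mul_exp_sub hρ hconj.1 hconj.2 α
  refine ⟨?_, ?_, fun lam hlam => ?_⟩
  · rw [gt_iff_lt, gt_iff_lt, ← sub_pos, ← sign_eq_one_iff, hsign, sign_eq_one_iff, sub_pos]
  · rw [← sub_eq_zero, ← sub_eq_zero (a := α), ← _root_.sign_eq_zero_iff, hsign,
      _root_.sign_eq_zero_iff]
  have hlam_sign : SignType.sign lam = SignType.sign (α - bstar) := by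
    have hmono : StrictMono fun l => ρ * (l / ω + 1) := fun l₁ l₂ hl => by
      dsimp only
      gcongr
    rw [← sub_zero lam, sign_sub_eq_sign_sub_of_apply_eq hmono
      (strictAnti_integral_mul_exp_sub hα hρ (b - α)) hlam 0, ← hsign]
    simp
  rw [← sign_eq_one_iff, hlam_sign, sign_eq_one_iff, sub_pos, ← _root_.sign_eq_zero_iff,
    hlam_sign, _root_.sign_eq_zero_iff, sub_eq_zero, ← sign_eq_neg_one_iff, hlam_sign,
    sign_eq_neg_one_iff, sub_neg]
  exact ⟨Iff.rfl, Iff.rfl, Iff.rfl⟩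

/-- Let `ρ > 0`, `b > 0`, `α > 0` constant, `ω > 0`, and let `b*` be the
conjugate of `b` (equal to `b` if `b = ρ`, otherwise the unique positive `b* ≠ b` with
`b* e^{−b*/ρ} = b e^{−b/ρ}`).  Then `∫₀¹ α e^{(b−α)x/ρ} dx > ρ` iff `α > b*`, and
`= ρ` iff `α = b*`.  In particular the unique real eigenvalue `λ` of
`ρ (λ/ω + 1) = ∫₀¹ α e^{(b−α−λ)x/ρ} dx` is positive iff `α > b*`, zero iff `α = b*`,
and negative iff `α < b*`. -/
theorem stmt7 (ρ b α ω : ℝ) (hρ : 0 < ρ) (hb : 0 < b) (hα : 0 < α) (hω : 0 < ω)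
    (bstar : ℝ)
    (hbstar₁ : b = ρ → bstar = b)
    (hbstar₂ : b ≠ ρ → 0 < bstar ∧ bstar ≠ b ∧
      bstar * Real.exp (-bstar / ρ) = b * Real.exp (-b / ρ)) :
    ((∫ x in (0 : ℝ)..1, α * Real.exp ((b - α) * x / ρ)) > ρ ↔ α > bstar) ∧
    ((∫ x in (0 : ℝ)..1, α * Real.exp ((b - α) * x / ρ)) = ρ ↔ α = bstar) ∧
    (∀ lam : ℝ,
      ρ * (lam / ω + 1) =
        (∫ x in (0 : ℝ)..1, α * Real.exp ((b - α - lam) * x / ρ)) →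
      ((0 < lam ↔ bstar < α) ∧ (lam = 0 ↔ α = bstar) ∧ (lam < 0 ↔ α < bstar))) :=
  stmt7_general ρ b α ω hρ hα hω bstar hbstar₁ hbstar₂
end

section
/- Let ρ_d > 0, ω > 0, b ∈ ℝ, and let α : [0,1] → (0, ∞) be continuous. Then the unique real solution λ of ρ_d·(λ/ω + 1) = ∫₀¹ α(x)·exp( (1/ρ_d)·∫₀ˣ (b − α(s) − λ) ds ) dx satisfies λ > −ω; consequently the corresponding eigenvector component A = (1/(λ + ω))·∫₀¹ α(x)Ω(x) dx is positive whenever Ω is positive. -/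
open Real Set

set_option maxHeartbeats 1000000 in
/-- Let `ρ > 0`, `ω > 0`, `b ∈ ℝ`, `α : [0,1] → (0,∞)` continuous.  Any
real solution `λ` of `ρ (λ/ω + 1) = ∫₀¹ α(x) exp((1/ρ) ∫₀ˣ (b − α(s) − λ) ds) dx`
satisfies `λ > −ω`; consequently `A = (1/(λ+ω)) ∫₀¹ α Ω dx` is positive whenever `Ω`
is positive (and continuous) on `[0,1]`. -/
theorem stmt8 (ρ ω b : ℝ) (hρ : 0 < ρ) (hω : 0 < ω) (α : ℝ → ℝ)
    (hαc : ContinuousOn α (Set.Icc 0 1))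
    (hαpos : ∀ x ∈ Set.Icc (0 : ℝ) 1, 0 < α x)
    (lam : ℝ)
    (hlam : ρ * (lam / ω + 1) =
      ∫ x in (0 : ℝ)..1,
        α x * Real.exp ((1 / ρ) * ∫ s in (0 : ℝ)..x, (b - α s - lam))) :
    lam > -ω ∧
    (∀ Ω : ℝ → ℝ, ContinuousOn Ω (Set.Icc 0 1) →
      (∀ x ∈ Set.Icc (0 : ℝ) 1, 0 < Ω x) →
      0 < (1 / (lam + ω)) * ∫ x in (0 : ℝ)..1, α x * Ω x) := by
  have hαcU : ContinuousOn α (Set.uIcc 0 1) := by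
    rwa [Set.uIcc_of_le (by norm_num : (0:ℝ) ≤ 1)]
  have hgint : MeasureTheory.IntegrableOn (fun s => b - α s - lam) (Set.Icc (0:ℝ) 1) := by
    apply ContinuousOn.integrableOn_Icc
    exact (continuousOn_const.sub hαc).sub continuousOn_const
  have hF : ContinuousOn (fun x => ∫ s in (0:ℝ)..x, (b - α s - lam)) (Set.Icc 0 1) := by
    have h01 : Set.uIcc (0:ℝ) 1 = Set.Icc 0 1 := Set.uIcc_of_le (by norm_num)
    have := intervalIntegral.continuousOn_primitive_interval
      (a := (0:ℝ)) (b := (1:ℝ)) (f := fun s => b - α s - lam)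
      (μ := MeasureTheory.volume) (by rwa [h01])
    rwa [h01] at this
  have hfc : ContinuousOn
      (fun x => α x * Real.exp ((1 / ρ) * ∫ s in (0:ℝ)..x, (b - α s - lam)))
      (Set.Icc 0 1) := by
    exact hαc.mul ((Real.continuous_exp.comp_continuousOn (continuousOn_const.mul hF)))
  have hpos : 0 < ρ * (lam / ω + 1) := by
    rw [hlam]
    apply intervalIntegral.intervalIntegral_pos_of_pos_on
    · apply ContinuousOn.intervalIntegrable
      rwa [Set.uIcc_of_le (by norm_num : (0:ℝ) ≤ 1)]
    · intro x hx
      have hx' : x ∈ Set.Icc (0:ℝ) 1 := ⟨le_of_lt hx.1, le_of_lt hx.2⟩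
      exact mul_pos (hαpos x hx') (Real.exp_pos _)
    · norm_num
  have hlw : lam > -ω := by
    have h1 : 0 < lam / ω + 1 := by nlinarith
    have h2 : lam = lam / ω * ω := (div_mul_cancel₀ lam hω.ne').symm
    nlinarith
  refine ⟨hlw, fun Ω hΩc hΩpos => ?_⟩
  have hint : 0 < ∫ x in (0:ℝ)..1, α x * Ω x := by
    apply intervalIntegral.intervalIntegral_pos_of_pos_on
    · apply ContinuousOn.intervalIntegrable
      rw [Set.uIcc_of_le (by norm_num : (0:ℝ) ≤ 1)]
      exact hαc.mul hΩc
    · intro x hx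
      have hx' : x ∈ Set.Icc (0:ℝ) 1 := ⟨le_of_lt hx.1, le_of_lt hx.2⟩
      exact mul_pos (hαpos x hx') (hΩpos x hx')
    · norm_num
  exact mul_pos (by rw [one_div]; exact inv_pos.mpr (by linarith)) hint
end

section
/- Let ρ_d > 0, ω > 0, b ∈ ℝ, let α : [0,1] → (0, ∞) be continuous, and let λ ∈ ℝ satisfy the eigenvalue relation ρ_d·(λ/ω + 1) = ∫₀¹ α(s)·exp( (1/ρ_d)·∫₀ˢ (b − α(σ) − λ) dσ ) ds with λ + ω > 0. Fix φ(0) > 0, set Ψ = ω·φ(0)/(λ + ω), J(x) = ∫₀ˣ α(s)·exp( (1/ρ_d)·∫₀ˢ (b − α(σ) − λ) dσ ) ds, and define φ(x) = φ(0)·exp( −(1/ρ_d)·∫₀ˣ (b − α(s) − λ) ds )·(1 − J(x)/J(1)). Then φ solves the adjoint eigenvalue problem: −ρ_d φ'(x) = (b − λ − α(x))·φ(x) + α(x)·Ψ for all x ∈ [0,1], with (λ + ω)Ψ = ω φ(0) and φ(1) = 0. -/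
/-!
Write `F = (1/ρ) ∫₀ˣ (b − α − λ)`, so that `J' = α e^F` and `φ = φ₀ e^{−F} (1 − J/J(1))`.
Differentiating, `φ' = −F' φ − φ₀ α / J(1)`: the exponential factor cancels in the second term.
The eigenvalue relation says exactly `J(1) = ρ (λ + ω)/ω`, which turns `φ₀ α / J(1)` into
`α Ψ / ρ`; and `φ(1) = 0` because `J(1) ≠ 0`.
-/

open Real Set

/-- `J(x) = ∫₀ˣ α(s) exp((1/ρ) ∫₀ˢ (b − α(σ) − λ) dσ) ds`. -/
noncomputable def Jfun (ρ b lam : ℝ) (α : ℝ → ℝ) (x : ℝ) : ℝ :=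
  ∫ s in (0 : ℝ)..x,
    α s * Real.exp ((1 / ρ) * ∫ σ in (0 : ℝ)..s, (b - α σ - lam))

/-- The explicit adjoint eigenfunction
`φ(x) = φ₀ exp(−(1/ρ) ∫₀ˣ (b − α(s) − λ) ds) (1 − J(x)/J(1))`. -/
noncomputable def adjointPhi (ρ b lam φ0 : ℝ) (α : ℝ → ℝ) (x : ℝ) : ℝ :=
  φ0 * Real.exp (-(1 / ρ) * ∫ s in (0 : ℝ)..x, (b - α s - lam)) *
    (1 - Jfun ρ b lam α x / Jfun ρ b lam α 1)

theorem ContinuousOn.hasDerivWithinAt_integral_Icc {E : Type*} [NormedAddCommGroup E]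
    [NormedSpace ℝ E] [CompleteSpace E] {f : ℝ → E} {a b x : ℝ}
    (hf : ContinuousOn f (Icc a b)) (hx : x ∈ Icc a b) :
    HasDerivWithinAt (fun y => ∫ t in a..y, f t) (f x) (Icc a b) x := by
  have : Fact (x ∈ Icc a b) := ⟨hx⟩
  exact intervalIntegral.integral_hasDerivWithinAt_right
    (hf.mono (uIcc_subset_Icc (left_mem_Icc.2 (hx.1.trans hx.2)) hx)).intervalIntegrable
    (hf.stronglyMeasurableAtFilter_nhdsWithin measurableSet_Icc x) (hf x hx)

theorem HasDerivWithinAt.exp_neg_mul_one_sub_div {F J : ℝ → ℝ} {f a c x : ℝ} {s : Set ℝ}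
    (hF : HasDerivWithinAt F f s x) (hJ : HasDerivWithinAt J (a * Real.exp (F x)) s x) :
    HasDerivWithinAt (fun y => Real.exp (-F y) * (1 - J y / c))
      (-f * (Real.exp (-F x) * (1 - J x / c)) - a / c) s x := by
  refine (hF.neg.exp.mul ((hJ.div_const c).const_sub 1)).congr_deriv ?_
  simp only [Pi.neg_apply, Real.exp_neg]
  field_simp
  ring

section

variable {ρ b lam : ℝ} {α : ℝ → ℝ}

theorem hasDerivWithinAt_Jfun (hα : ContinuousOn α (Icc 0 1)) {x : ℝ} (hx : x ∈ Icc (0 : ℝ) 1) :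
    HasDerivWithinAt (Jfun ρ b lam α)
      (α x * Real.exp ((1 / ρ) * ∫ σ in (0 : ℝ)..x, (b - α σ - lam))) (Icc 0 1) x := by
  have hg : ContinuousOn (fun σ => b - α σ - lam) (Icc 0 1) := by fun_prop
  have hG : ContinuousOn (fun s => ∫ σ in (0 : ℝ)..s, (b - α σ - lam)) (Icc 0 1) :=
    fun y hy => (hg.hasDerivWithinAt_integral_Icc hy).continuousWithinAt
  exact (hα.mul (continuousOn_const.mul hG).rexp).hasDerivWithinAt_integral_Icc hx

theorem hasDerivWithinAt_adjointPhi {φ0 : ℝ} (hα : ContinuousOn α (Icc 0 1)) {x : ℝ}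
    (hx : x ∈ Icc (0 : ℝ) 1) :
    HasDerivWithinAt (adjointPhi ρ b lam φ0 α)
      (-(1 / ρ) * (b - α x - lam) * adjointPhi ρ b lam φ0 α x -
        φ0 * α x / Jfun ρ b lam α 1) (Icc 0 1) x := by
  have hg : ContinuousOn (fun σ => b - α σ - lam) (Icc 0 1) := by fun_prop
  have hF := (hg.hasDerivWithinAt_integral_Icc hx).const_mul (1 / ρ)
  have hφ : adjointPhi ρ b lam φ0 α = fun y => φ0 *
      (Real.exp (-((1 / ρ) * ∫ σ in (0 : ℝ)..y, (b - α σ - lam))) *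
        (1 - Jfun ρ b lam α y / Jfun ρ b lam α 1)) := by
    funext y
    simp only [adjointPhi, neg_mul, mul_assoc]
  rw [hφ]
  refine ((HasDerivWithinAt.exp_neg_mul_one_sub_div hF
    (hasDerivWithinAt_Jfun hα hx)).const_mul φ0).congr_deriv ?_
  ring

theorem adjointPhi_zero (φ0 : ℝ) : adjointPhi ρ b lam φ0 α 0 = φ0 := by
  simp [adjointPhi, Jfun]

theorem adjointPhi_one {φ0 : ℝ} (h : Jfun ρ b lam α 1 ≠ 0) : adjointPhi ρ b lam φ0 α 1 = 0 := by
  simp [adjointPhi, h]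

end

theorem stmt9_general (ρ ω b : ℝ) (hρ : 0 < ρ) (hω : 0 < ω) (α : ℝ → ℝ)
    (hαc : ContinuousOn α (Set.Icc 0 1))
    (lam : ℝ) (hlamω : 0 < lam + ω)
    (hrel : ρ * (lam / ω + 1) =
      ∫ s in (0 : ℝ)..1,
        α s * Real.exp ((1 / ρ) * ∫ σ in (0 : ℝ)..s, (b - α σ - lam)))
    (φ0 : ℝ) :
    (∀ x ∈ Set.Icc (0 : ℝ) 1,
      HasDerivWithinAt (adjointPhi ρ b lam φ0 α)
        (-(1 / ρ) * ((b - lam - α x) * adjointPhi ρ b lam φ0 α x +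
          α x * (ω * φ0 / (lam + ω))))
        (Set.Icc 0 1) x) ∧
    (lam + ω) * (ω * φ0 / (lam + ω)) = ω * adjointPhi ρ b lam φ0 α 0 ∧
    adjointPhi ρ b lam φ0 α 1 = 0 := by
  have hJ1 : Jfun ρ b lam α 1 = ρ * (lam + ω) / ω := by
    rw [Jfun, ← hrel]
    field_simp
  have hJ1_ne : Jfun ρ b lam α 1 ≠ 0 := by
    rw [hJ1]
    positivity
  refine ⟨fun x hx => ?_, ?_, adjointPhi_one hJ1_ne⟩
  · refine (hasDerivWithinAt_adjointPhi hαc hx).congr_deriv ?_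
    rw [hJ1]
    field_simp
    ring
  · rw [adjointPhi_zero]
    field_simp

/-- Let `ρ > 0`, `ω > 0`, `b ∈ ℝ`, `α : [0,1] → (0,∞)` continuous, and
let `λ ∈ ℝ` satisfy the eigenvalue relation with `λ + ω > 0`.  Fix `φ₀ > 0` and set
`Ψ = ω φ₀ / (λ + ω)`.  Then `φ` defined by the explicit formula solves the adjoint
eigenvalue problem: `−ρ φ'(x) = (b − λ − α(x)) φ(x) + α(x) Ψ` on `[0,1]`, with
`(λ + ω) Ψ = ω φ(0)` and `φ(1) = 0`. -/
theorem stmt9 (ρ ω b : ℝ) (hρ : 0 < ρ) (hω : 0 < ω) (α : ℝ → ℝ)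
    (hαc : ContinuousOn α (Set.Icc 0 1))
    (hαpos : ∀ x ∈ Set.Icc (0 : ℝ) 1, 0 < α x)
    (lam : ℝ) (hlamω : 0 < lam + ω)
    (hrel : ρ * (lam / ω + 1) =
      ∫ s in (0 : ℝ)..1,
        α s * Real.exp ((1 / ρ) * ∫ σ in (0 : ℝ)..s, (b - α σ - lam)))
    (φ0 : ℝ) (hφ0 : 0 < φ0) :
    (∀ x ∈ Set.Icc (0 : ℝ) 1,
      HasDerivWithinAt (adjointPhi ρ b lam φ0 α)
        (-(1 / ρ) * ((b - lam - α x) * adjointPhi ρ b lam φ0 α x +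
          α x * (ω * φ0 / (lam + ω))))
        (Set.Icc 0 1) x) ∧
    (lam + ω) * (ω * φ0 / (lam + ω)) = ω * adjointPhi ρ b lam φ0 α 0 ∧
    adjointPhi ρ b lam φ0 α 1 = 0 :=
  stmt9_general ρ ω b hρ hω α hαc lam hlamω hrel φ0
end
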